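/- arXiv:2208.07300 — 3 statements merged into one kernel-verified Lean document; each statement's English description precedes it below -/
import Mathlib

section
/- Let 𝓑 be a basis of a Banach space X and 𝐧 a strictly increasing sequence of positive integers. Then: (i) if 𝓑 is C-(𝐧, consecutive almost greedy) of type II, then 𝓑 is C-suppression quasi-greedy and C-(𝐧, RSLC); (ii) if 𝓑 is C_ℓ-suppression quasi-greedy and C_rs-(𝐧, RSLC), then 𝓑 is (C_ℓ·C_rs)-(𝐧, consecutive almost greedy) of type II. -/
open scoped BigOperators ENNReal NNReal

/-- The collection `𝕋(𝐧)`: pairs of finite sets `(A, D)` with `A ⊆ 𝐧`, `|A| ≤ |D|`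
and `A < D ∩ 𝐧`. -/
def TPair (seq : ℕ → ℕ) (A D : Finset ℕ) : Prop :=
  (↑A : Set ℕ) ⊆ Set.range seq ∧ A.card ≤ D.card ∧
    ∀ a ∈ A, ∀ d ∈ D, d ∈ Set.range seq → a < d

/-- The collection `𝕊(𝐧)`: pairs of finite sets `(A, D)` with `A ⊆ 𝐧` and `|A| ≤ |D|`. -/
def SPair (seq : ℕ → ℕ) (A D : Finset ℕ) : Prop :=
  (↑A : Set ℕ) ⊆ Set.range seq ∧ A.card ≤ D.card

/-- The interval `{n_{k+1}, …, n_{k+m}}` of `m` consecutive terms of the sequence `seq`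
(0-indexed: `seq k, …, seq (k+m-1)`). -/
def intervalSet (seq : ℕ → ℕ) (k m : ℕ) : Finset ℕ :=
  (Finset.range m).image fun i => seq (k + i)

/-- The (1-based) index `ι(max A)` of the largest element of `A` in the sequence `seq`
(`0` if `A` is empty). -/
noncomputable def iotaMax (seq : ℕ → ℕ) (A : Finset ℕ) : ℕ :=
  if h : A.Nonempty then sInf {i | seq i = A.max' h} + 1 else 0

/-- The collection `𝕋^ω(𝐧)`: pairs of finite sets `(A, D)` with `A ⊆ 𝐧`, `ω(A) ≤ ω(D)`
and `A < D ∩ 𝐧`. -/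
def WTPair (w : Set ℕ → ℝ≥0∞) (seq : ℕ → ℕ) (A D : Finset ℕ) : Prop :=
  (↑A : Set ℕ) ⊆ Set.range seq ∧ w (↑A : Set ℕ) ≤ w (↑D : Set ℕ) ∧
    ∀ a ∈ A, ∀ d ∈ D, d ∈ Set.range seq → a < d

/-- A (semi-normalized) basis `(e_n)` of a Banach space `X`, together with its biorthogonal
functionals `(e_n^*)`: the span of the `e_n` is norm-dense, `e_j^*(e_k) = δ_{jk}`, and the
norms of the `e_n` and `e_n^*` are bounded above and away from zero. -/
structure BasisOf (𝕜 : Type*) (X : Type*) [RCLike 𝕜] [NormedAddCommGroup X]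
    [NormedSpace 𝕜 X] where
  e : ℕ → X
  coord : ℕ → X →L[𝕜] 𝕜
  dense_span : Dense (↑(Submodule.span 𝕜 (Set.range e)) : Set X)
  biorth : ∀ j k : ℕ, coord j (e k) = if j = k then (1 : 𝕜) else 0
  norm_bounds : ∃ c₁ c₂ : ℝ, 0 < c₁ ∧ (∀ n, c₁ ≤ ‖e n‖ ∧ c₁ ≤ ‖coord n‖) ∧
    ∀ n, ‖e n‖ ≤ c₂ ∧ ‖coord n‖ ≤ c₂

namespace BasisOf

variable {𝕜 : Type*} {X : Type*} [RCLike 𝕜] [NormedAddCommGroup X] [NormedSpace 𝕜 X]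
variable (B : BasisOf 𝕜 X)

/-- The projection `P_A(x) = ∑_{n ∈ A} e_n^*(x) e_n`. -/
noncomputable def proj (A : Finset ℕ) (x : X) : X := ∑ n ∈ A, B.coord n x • B.e n

/-- `1_{εA} = ∑_{n ∈ A} ε_n e_n`. -/
noncomputable def sgnSum (ε : ℕ → 𝕜) (A : Finset ℕ) : X := ∑ n ∈ A, ε n • B.e n

/-- `1_A = ∑_{n ∈ A} e_n`. -/
noncomputable def ones (A : Finset ℕ) : X := ∑ n ∈ A, B.e n

/-- `P^𝐧_m(x) = ∑_{i=1}^m e_{n_i}^*(x) e_{n_i}`, the projection on the first `m` terms of the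
subsequence given by `seq`. -/
noncomputable def projSeq (seq : ℕ → ℕ) (m : ℕ) (x : X) : X :=
  ∑ i ∈ Finset.range m, B.coord (seq i) x • B.e (seq i)

/-- `A` is a greedy set of `x`: the coefficients inside `A` dominate those outside. -/
def IsGreedySet (x : X) (A : Finset ℕ) : Prop :=
  ∀ a ∈ A, ∀ b ∉ A, ‖B.coord b x‖ ≤ ‖B.coord a x‖

/-- The support `{n : e_n^*(x) ≠ 0}`. -/
def supp (x : X) : Set ℕ := {n | B.coord n x ≠ 0}

/-- `𝓑` is `C`-(`𝐧`, strong partially greedy):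
`‖x - G_m(x)‖ ≤ C ⋅ σ̂^𝐧_m(x)` for all `x`, all `m ≥ 1` and all greedy sums. -/
def SPGWith (seq : ℕ → ℕ) (C : ℝ) : Prop :=
  ∀ x : X, ∀ m : ℕ, 1 ≤ m → ∀ A : Finset ℕ, A.card = m → B.IsGreedySet x A →
    ∀ k : ℕ, k ≤ m → ‖x - B.proj A x‖ ≤ C * ‖x - B.projSeq seq k x‖

/-- `𝓑` is (`𝐧`, strong partially greedy). -/
def SPG (seq : ℕ → ℕ) : Prop := ∃ C : ℝ, 1 ≤ C ∧ B.SPGWith seq C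

/-- `𝓑` is quasi-greedy with constant `C`. -/
def QuasiGreedyWith (C : ℝ) : Prop :=
  ∀ x : X, ∀ A : Finset ℕ, A.Nonempty → B.IsGreedySet x A → ‖B.proj A x‖ ≤ C * ‖x‖

/-- `𝓑` is quasi-greedy. -/
def QuasiGreedy : Prop := ∃ C : ℝ, B.QuasiGreedyWith C

/-- `𝓑` is suppression quasi-greedy with constant `C`. -/
def SuppQGWith (C : ℝ) : Prop :=
  ∀ x : X, ∀ A : Finset ℕ, A.Nonempty → B.IsGreedySet x A → ‖x - B.proj A x‖ ≤ C * ‖x‖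

/-- `𝓑` is `C`-(`𝐧`, PSLC). -/
def PSLCWith (seq : ℕ → ℕ) (C : ℝ) : Prop :=
  ∀ x : X, (∀ n, ‖B.coord n x‖ ≤ 1) → ∀ A D : Finset ℕ, TPair seq A D →
    (∀ d ∈ D, B.coord d x = 0) →
    (∀ a ∈ A, ∀ j : ℕ, (j ∈ D ∨ B.coord j x ≠ 0) → j ∈ Set.range seq → a < j) →
    ∀ ε δ : ℕ → 𝕜, (∀ n, ‖ε n‖ = 1) → (∀ n, ‖δ n‖ = 1) →
      ‖x + B.sgnSum ε A‖ ≤ C * ‖x + B.sgnSum δ D‖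

/-- `𝓑` is (`𝐧`, PSLC). -/
def PSLC (seq : ℕ → ℕ) : Prop := ∃ C : ℝ, 1 ≤ C ∧ B.PSLCWith seq C

/-- `𝓑` is (`𝐧`, superconservative) with constant `C`. -/
def SuperconservativeWith (seq : ℕ → ℕ) (C : ℝ) : Prop :=
  ∀ A D : Finset ℕ, TPair seq A D →
    ∀ ε δ : ℕ → 𝕜, (∀ n, ‖ε n‖ = 1) → (∀ n, ‖δ n‖ = 1) →
      ‖B.sgnSum ε A‖ ≤ C * ‖B.sgnSum δ D‖

/-- `𝓑` is (`𝐧`, superconservative). -/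
def Superconservative (seq : ℕ → ℕ) : Prop :=
  ∃ C : ℝ, 0 < C ∧ B.SuperconservativeWith seq C

/-- `𝓑` is (`𝐧`, conservative) with constant `C`. -/
def ConservativeWith (seq : ℕ → ℕ) (C : ℝ) : Prop :=
  ∀ A D : Finset ℕ, TPair seq A D → ‖B.ones A‖ ≤ C * ‖B.ones D‖

/-- `𝓑` is (`𝐧`, conservative). -/
def Conservative (seq : ℕ → ℕ) : Prop := ∃ C : ℝ, 0 < C ∧ B.ConservativeWith seq C

/-- `𝓑` is (`𝐧`, democratic) with constant `C`. -/
def DemocraticWith (seq : ℕ → ℕ) (C : ℝ) : Prop :=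
  ∀ A D : Finset ℕ, SPair seq A D → ‖B.ones A‖ ≤ C * ‖B.ones D‖

/-- `𝓑` is (`𝐧`, democratic). -/
def Democratic (seq : ℕ → ℕ) : Prop := ∃ C : ℝ, B.DemocraticWith seq C

/-- `𝓑` is (`𝐧`, almost greedy) with constant `C`:
`‖x - G_m(x)‖ ≤ C σ̃^𝐧_m(x)` where `σ̃^𝐧_m(x) = inf {‖x - P_D(x)‖ : D ⊆ 𝐧, |D| = m}`. -/
def AlmostGreedyWith (seq : ℕ → ℕ) (C : ℝ) : Prop :=
  ∀ x : X, ∀ m : ℕ, 1 ≤ m → ∀ A : Finset ℕ, A.card = m → B.IsGreedySet x A →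
    ∀ D : Finset ℕ, (↑D : Set ℕ) ⊆ Set.range seq → D.card = m →
      ‖x - B.proj A x‖ ≤ C * ‖x - B.proj D x‖

/-- `𝓑` is (`𝐧`, almost greedy). -/
def AlmostGreedy (seq : ℕ → ℕ) : Prop := ∃ C : ℝ, 1 ≤ C ∧ B.AlmostGreedyWith seq C

/-- `𝓑` is 1-unconditional. -/
def OneUnconditional : Prop :=
  ∀ (F : Finset ℕ) (a b : ℕ → 𝕜), (∀ n, ‖a n‖ ≤ ‖b n‖) →
    ‖∑ n ∈ F, a n • B.e n‖ ≤ ‖∑ n ∈ F, b n • B.e n‖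

/-- `𝓑` is `C`-(`𝐧`, consecutive almost greedy) of type I. -/
def CAGIWith (seq : ℕ → ℕ) (C : ℝ) : Prop :=
  ∀ x : X, ∀ m : ℕ, 1 ≤ m → ∀ A : Finset ℕ, A.card = m → B.IsGreedySet x A →
    ∀ k : ℕ, ‖x - B.proj A x‖ ≤ C * ‖x - B.proj (intervalSet seq k m) x‖

/-- `𝓑` is `C`-(`𝐧`, consecutive almost greedy) of type II. -/
def CAGIIWith (seq : ℕ → ℕ) (C : ℝ) : Prop :=
  ∀ x : X, ∀ m : ℕ, 1 ≤ m → ∀ A : Finset ℕ, A.card = m → B.IsGreedySet x A →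
    ∀ k p : ℕ, ((↑(intervalSet seq k p) : Set ℕ) ∩ B.supp x).ncard ≤ m →
      ‖x - B.proj A x‖ ≤ C * ‖x - B.proj (intervalSet seq k p) x‖

/-- `𝓑` is `C`-(`𝐧`, RSLC). -/
def RSLCWith (seq : ℕ → ℕ) (C : ℝ) : Prop :=
  ∀ x : X, (∀ n, ‖B.coord n x‖ ≤ 1) → ∀ A D : Finset ℕ, SPair seq A D →
    (∀ d ∈ D, B.coord d x = 0) →
    (∀ j : ℕ, (j ∈ D ∨ B.coord j x ≠ 0) → j ∈ Set.range seq →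
      (∀ a ∈ A, j < a) ∨ (∀ a ∈ A, a < j)) →
    ∀ ε δ : ℕ → 𝕜, (∀ n, ‖ε n‖ = 1) → (∀ n, ‖δ n‖ = 1) →
      ‖x + B.sgnSum ε A‖ ≤ C * ‖x + B.sgnSum δ D‖

/-- `𝓑` is `C`-(`𝐧`, SLC). -/
def SLCWith (seq : ℕ → ℕ) (C : ℝ) : Prop :=
  ∀ x : X, (∀ n, ‖B.coord n x‖ ≤ 1) → ∀ A D : Finset ℕ, SPair seq A D →
    Disjoint A D → (∀ a ∈ A, B.coord a x = 0) → (∀ d ∈ D, B.coord d x = 0) →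
    ∀ ε δ : ℕ → 𝕜, (∀ n, ‖ε n‖ = 1) → (∀ n, ‖δ n‖ = 1) →
      ‖x + B.sgnSum ε A‖ ≤ C * ‖x + B.sgnSum δ D‖

/-- The Lebesgue-type parameter `L̂^𝐧_m`: the least constant `C ∈ [0,∞]` with
`‖x - G_m(x)‖ ≤ C σ̂^𝐧_m(x)` for all `x` and all greedy sums `G_m(x)`. -/
noncomputable def Lhat (seq : ℕ → ℕ) (m : ℕ) : ℝ≥0∞ :=
  sInf {C : ℝ≥0∞ | ∀ (x : X) (A : Finset ℕ), A.card = m → B.IsGreedySet x A →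
    ∀ k : ℕ, k ≤ m →
      (‖x - B.proj A x‖₊ : ℝ≥0∞) ≤ C * (‖x - B.projSeq seq k x‖₊ : ℝ≥0∞)}

/-- The parameter `g_m^c`. -/
noncomputable def gc (m : ℕ) : ℝ≥0∞ :=
  ⨆ (x : X) (_ : x ≠ 0) (A : Finset ℕ) (_ : A.card ≤ m) (_ : B.IsGreedySet x A),
    (‖x - B.proj A x‖₊ : ℝ≥0∞) / (‖x‖₊ : ℝ≥0∞)

/-- The parameter `g̃_m`. -/
noncomputable def gtilde (m : ℕ) : ℝ≥0∞ :=
  ⨆ (x : X) (_ : x ≠ 0) (A : Finset ℕ) (A' : Finset ℕ) (_ : A ⊆ A') (_ : A.card < A'.card)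
    (_ : A'.card ≤ m) (_ : B.IsGreedySet x A) (_ : B.IsGreedySet x A'),
    (‖B.proj A' x - B.proj A x‖₊ : ℝ≥0∞) / (‖x‖₊ : ℝ≥0∞)

/-- The parameter `sc^𝐧_m`. -/
noncomputable def scParam (seq : ℕ → ℕ) (m : ℕ) : ℝ≥0∞ :=
  ⨆ (A : Finset ℕ) (D : Finset ℕ) (_ : TPair seq A D) (_ : D.card ≤ m)
    (_ : ∀ a ∈ A, a ≤ seq (m - 1)) (ε : ℕ → 𝕜) (_ : ∀ n, ‖ε n‖ = 1)
    (δ : ℕ → 𝕜) (_ : ∀ n, ‖δ n‖ = 1),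
    (‖B.sgnSum ε A‖₊ : ℝ≥0∞) / (‖B.sgnSum δ D‖₊ : ℝ≥0∞)

/-- The parameter `ω^𝐧_m`. -/
noncomputable def omegaParam (seq : ℕ → ℕ) (m : ℕ) : ℝ≥0∞ :=
  ⨆ (x : X) (_ : ∀ n, ‖B.coord n x‖ ≤ 1) (A : Finset ℕ) (D : Finset ℕ)
    (_ : (↑A : Set ℕ) ⊆ Set.range seq) (_ : A.card ≤ D.card) (_ : D.card ≤ m)
    (_ : ∀ a ∈ A, a ≤ seq (m - 1)) (_ : ∀ d ∈ D, B.coord d x = 0)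
    (_ : ∀ a ∈ A, ∀ j : ℕ, (j ∈ D ∨ B.coord j x ≠ 0) → j ∈ Set.range seq → a < j)
    (ε : ℕ → 𝕜) (_ : ∀ n, ‖ε n‖ = 1) (δ : ℕ → 𝕜) (_ : ∀ n, ‖δ n‖ = 1),
    (‖x + B.sgnSum ε A‖₊ : ℝ≥0∞) / (‖x + B.sgnSum δ D‖₊ : ℝ≥0∞)

/-- The parameter `ω̂^𝐧_m`. -/
noncomputable def omegaHatParam (seq : ℕ → ℕ) (m : ℕ) : ℝ≥0∞ :=
  ⨆ (x : X) (_ : ∀ n, ‖B.coord n x‖ ≤ 1) (A : Finset ℕ) (D : Finset ℕ)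
    (_ : (↑A : Set ℕ) ⊆ Set.range seq) (_ : A.card ≤ D.card) (_ : D.card ≤ m)
    (_ : ∀ a ∈ A, a ≤ seq (m - 1))
    (_ : ∀ d ∈ D, B.coord d (x - B.proj A x) = 0)
    (_ : ∀ a ∈ A, ∀ j : ℕ, (j ∈ D ∨ B.coord j (x - B.proj A x) ≠ 0) →
      j ∈ Set.range seq → a < j)
    (ε : ℕ → 𝕜) (_ : ∀ n, ‖ε n‖ = 1),
    (‖x‖₊ : ℝ≥0∞) / (‖x - B.proj A x + B.sgnSum ε D‖₊ : ℝ≥0∞)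

/-- `κ = sup_{j,k} ‖e_j‖ ‖e_k^*‖`. -/
noncomputable def kappa : ℝ≥0∞ :=
  ⨆ (j : ℕ) (k : ℕ), ((‖B.e j‖₊ * ‖B.coord k‖₊ : ℝ≥0) : ℝ≥0∞)

/-- `𝓑` is `𝐬`-(`𝐧`, strong partially greedy) with constant `C`:
the strong partially greedy inequality for all orders `m` in the sequence `s`. -/
def SPGOnWith (seq : ℕ → ℕ) (s : ℕ → ℕ) (C : ℝ) : Prop :=
  ∀ x : X, ∀ i : ℕ, ∀ A : Finset ℕ, A.card = s i → B.IsGreedySet x A →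
    ∀ k : ℕ, k ≤ s i → ‖x - B.proj A x‖ ≤ C * ‖x - B.projSeq seq k x‖

/-- `𝓑` is (`λ`, `𝐧`, strong partially greedy). -/
def LamSPG (seq : ℕ → ℕ) (lam : ℝ) : Prop :=
  ∃ C : ℝ, 1 ≤ C ∧ ∀ x : X, ∀ m : ℕ, 1 ≤ m →
    ∀ A : Finset ℕ, A.card = ⌈lam * (m : ℝ)⌉₊ → B.IsGreedySet x A →
      ∀ k : ℕ, k ≤ m → ‖x - B.proj A x‖ ≤ C * ‖x - B.projSeq seq k x‖

/-- `𝓑` is (`λ`, `𝐧`, PSLC). -/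
def LamPSLC (seq : ℕ → ℕ) (lam : ℝ) : Prop :=
  ∃ C : ℝ, 1 ≤ C ∧ ∀ x : X, (∀ n, ‖B.coord n x‖ ≤ 1) →
    ∀ A D : Finset ℕ, (↑A : Set ℕ) ⊆ Set.range seq → A.card ≤ D.card →
      (lam - 1) * (iotaMax seq A : ℝ) + A.card ≤ D.card →
      (∀ d ∈ D, B.coord d x = 0) →
      (∀ a ∈ A, ∀ j : ℕ, (j ∈ D ∨ B.coord j x ≠ 0) → j ∈ Set.range seq → a < j) →
      ∀ ε δ : ℕ → 𝕜, (∀ n, ‖ε n‖ = 1) → (∀ n, ‖δ n‖ = 1) →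
        ‖x + B.sgnSum ε A‖ ≤ C * ‖x + B.sgnSum δ D‖

/-- `𝓑` is (`λ`, `𝐧`, superconservative). -/
def LamSuperconservative (seq : ℕ → ℕ) (lam : ℝ) : Prop :=
  ∃ C : ℝ, 0 < C ∧ ∀ A D : Finset ℕ, TPair seq A D →
    (lam - 1) * (iotaMax seq A : ℝ) + A.card ≤ D.card →
    ∀ ε δ : ℕ → 𝕜, (∀ n, ‖ε n‖ = 1) → (∀ n, ‖δ n‖ = 1) →
      ‖B.sgnSum ε A‖ ≤ C * ‖B.sgnSum δ D‖

/-- `𝓑` is (`λ`, `𝐧`, conservative). -/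
def LamConservative (seq : ℕ → ℕ) (lam : ℝ) : Prop :=
  ∃ C : ℝ, 0 < C ∧ ∀ A D : Finset ℕ, TPair seq A D →
    (lam - 1) * (iotaMax seq A : ℝ) + A.card ≤ D.card →
    ‖B.ones A‖ ≤ C * ‖B.ones D‖

/-- `𝓑` is `ω`-(`𝐧`, strong partially greedy) for the weight on sets `w`. -/
def WSPG (seq : ℕ → ℕ) (w : Set ℕ → ℝ≥0∞) : Prop :=
  ∃ C : ℝ, 1 ≤ C ∧ ∀ x : X, ∀ m : ℕ, 1 ≤ m → ∀ A : Finset ℕ, A.card = m →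
    B.IsGreedySet x A → ∀ m' : ℕ,
      w (↑((Finset.range m').image seq \ A) : Set ℕ) ≤
        w (↑(A \ (Finset.range m').image seq) : Set ℕ) →
      ‖x - B.proj A x‖ ≤ C * ‖x - B.proj ((Finset.range m').image seq) x‖

/-- `𝓑` is `ω`-(`𝐧`, PSLC). -/
def WPSLC (seq : ℕ → ℕ) (w : Set ℕ → ℝ≥0∞) : Prop :=
  ∃ C : ℝ, 1 ≤ C ∧ ∀ x : X, (∀ n, ‖B.coord n x‖ ≤ 1) →
    ∀ A D : Finset ℕ, WTPair w seq A D →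
      (∀ d ∈ D, B.coord d x = 0) →
      (∀ a ∈ A, ∀ j : ℕ, (j ∈ D ∨ B.coord j x ≠ 0) → j ∈ Set.range seq → a < j) →
      ∀ ε δ : ℕ → 𝕜, (∀ n, ‖ε n‖ = 1) → (∀ n, ‖δ n‖ = 1) →
        ‖x + B.sgnSum ε A‖ ≤ C * ‖x + B.sgnSum δ D‖

/-- `𝓑` is `ω`-(`𝐧`, superconservative). -/
def WSuperconservative (seq : ℕ → ℕ) (w : Set ℕ → ℝ≥0∞) : Prop :=
  ∃ C : ℝ, 0 < C ∧ ∀ A D : Finset ℕ, WTPair w seq A D →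
    ∀ ε δ : ℕ → 𝕜, (∀ n, ‖ε n‖ = 1) → (∀ n, ‖δ n‖ = 1) →
      ‖B.sgnSum ε A‖ ≤ C * ‖B.sgnSum δ D‖

/-- `𝓑` is `ω`-(`𝐧`, conservative). -/
def WConservative (seq : ℕ → ℕ) (w : Set ℕ → ℝ≥0∞) : Prop :=
  ∃ C : ℝ, 0 < C ∧ ∀ A D : Finset ℕ, WTPair w seq A D → ‖B.ones A‖ ≤ C * ‖B.ones D‖

end BasisOf

/-- A Banach space over `𝕜` equipped with a basis. -/
structure BanachWithBasis (𝕜 : Type*) [RCLike 𝕜] where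
  carrier : Type
  [grp : NormedAddCommGroup carrier]
  [mod : NormedSpace 𝕜 carrier]
  [comp : CompleteSpace carrier]
  basis : BasisOf 𝕜 carrier

attribute [instance] BanachWithBasis.grp BanachWithBasis.mod BanachWithBasis.comp

section Helpers

variable {𝕜 X : Type*} [RCLike 𝕜] [NormedAddCommGroup X] [NormedSpace 𝕜 X]
variable (B : BasisOf 𝕜 X)

lemma BasisOf.coord_sum' (F : Finset ℕ) (c : ℕ → 𝕜) (j : ℕ) :
    B.coord j (∑ n ∈ F, c n • B.e n) = if j ∈ F then c j else 0 := by
  rw [map_sum]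
  have h : ∀ n ∈ F, B.coord j (c n • B.e n) = if j = n then c n else 0 := by
    intro n _
    rw [map_smul, B.biorth, smul_eq_mul]
    by_cases h : j = n <;> simp [h]
  rw [Finset.sum_congr rfl h, Finset.sum_ite_eq]

lemma BasisOf.coord_proj (A : Finset ℕ) (x : X) (j : ℕ) :
    B.coord j (B.proj A x) = if j ∈ A then B.coord j x else 0 := by
  rw [BasisOf.proj]; exact B.coord_sum' A _ j

lemma BasisOf.coord_sgnSum (ε : ℕ → 𝕜) (A : Finset ℕ) (j : ℕ) :
    B.coord j (B.sgnSum ε A) = if j ∈ A then ε j else 0 := by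
  rw [BasisOf.sgnSum]; exact B.coord_sum' A _ j

lemma BasisOf.e_norm_pos (n : ℕ) : 0 < ‖B.e n‖ := by
  obtain ⟨c₁, c₂, hc₁, hlow, hup⟩ := B.norm_bounds
  exact lt_of_lt_of_le hc₁ (hlow n).1

lemma BasisOf.suppQG_pos {Cl : ℝ} (h : B.SuppQGWith Cl) : 0 < Cl := by
  obtain ⟨c₁, c₂, hc₁, hlow, hup⟩ := B.norm_bounds
  set x := B.e 0 + B.e 1 with hx
  have hcoord : ∀ j, B.coord j x = (if j = 0 then 1 else 0) + (if j = 1 then 1 else 0) := by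
    intro j; rw [hx, map_add, B.biorth, B.biorth]
  have hgr : B.IsGreedySet x {0} := by
    intro a ha b _
    simp only [Finset.mem_singleton] at ha
    subst ha
    rw [hcoord, hcoord]
    by_cases hb0 : b = 0 <;> by_cases hb1 : b = 1 <;> simp [hb0, hb1]
  have hQ := h x {0} ⟨0, Finset.mem_singleton_self 0⟩ hgr
  have hproj : B.proj {0} x = B.e 0 := by
    rw [BasisOf.proj, Finset.sum_singleton, hcoord]
    norm_num
  rw [hproj] at hQ
  have hxe : x - B.e 0 = B.e 1 := by rw [hx]; abel
  rw [hxe] at hQ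
  have h1 : c₁ ≤ ‖B.e 1‖ := (hlow 1).1
  by_contra h0
  push_neg at h0
  have : Cl * ‖x‖ ≤ 0 := mul_nonpos_of_nonpos_of_nonneg h0 (norm_nonneg x)
  linarith

lemma BasisOf.suppQG_one_le {Cl : ℝ} (h : B.SuppQGWith Cl) : 1 ≤ Cl := by
  classical
  obtain ⟨c₁, c₂, hc₁, hlow, hup⟩ := B.norm_bounds
  have hCl0 : 0 < Cl := B.suppQG_pos h
  by_contra hlt
  push_neg at hlt
  set S : Set ℝ := {r : ℝ | ∃ F : Finset ℕ, ∃ c : ℕ → 𝕜, (∀ n, ‖c n‖ ≤ 1) ∧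
    r = ‖∑ n ∈ F, c n • B.e n‖} with hS
  have hSnonneg : ∀ r ∈ S, 0 ≤ r := by rintro r ⟨F, c, hc, rfl⟩; exact norm_nonneg _
  have key : ∀ r ∈ S, ∃ r' ∈ S, r ≤ Cl * r' ∧ r' ≤ c₂ + r := by
    rintro r ⟨F, c, hc, rfl⟩
    set a := F.sup id + 1 with ha
    have haF : a ∉ F := by
      intro hmem
      have h2 := Finset.le_sup (f := id) hmem
      simp only [id] at h2
      omega
    set c' : ℕ → 𝕜 := Function.update c a 1 with hc'
    set x := ∑ n ∈ insert a F, c' n • B.e n with hx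
    have hcoord : ∀ j, B.coord j x = if j ∈ insert a F then c' j else 0 := fun j =>
      B.coord_sum' _ _ j
    have hc'1 : ∀ n, ‖c' n‖ ≤ 1 := by
      intro n
      by_cases hn : n = a
      · subst hn; simp [hc']
      · rw [hc', Function.update_of_ne hn]; exact hc n
    have hca : B.coord a x = 1 := by rw [hcoord]; simp [hc']
    have hgr : B.IsGreedySet x {a} := by
      intro i hi b _
      simp only [Finset.mem_singleton] at hi
      subst hi
      rw [hca, hcoord b]
      split_ifs with hb
      · simpa using hc'1 b
      · simp
    have hQ := h x {a} ⟨a, Finset.mem_singleton_self a⟩ hgr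
    have hproj : B.proj {a} x = B.e a := by
      rw [BasisOf.proj, Finset.sum_singleton, hca, one_smul]
    have hxs : x = B.e a + ∑ n ∈ F, c n • B.e n := by
      rw [hx, Finset.sum_insert haF]
      have hcongr : ∑ n ∈ F, c' n • B.e n = ∑ n ∈ F, c n • B.e n := by
        apply Finset.sum_congr rfl
        intro n hn
        rw [hc', Function.update_of_ne (by rintro rfl; exact haF hn)]
      rw [hcongr, hc']
      simp
    have hxe : x - B.proj {a} x = ∑ n ∈ F, c n • B.e n := by
      rw [hproj, hxs]; abel
    refine ⟨‖x‖, ⟨insert a F, c', hc'1, rfl⟩, ?_, ?_⟩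
    · rw [← hxe]; exact hQ
    · calc ‖x‖ ≤ ‖B.e a‖ + ‖∑ n ∈ F, c n • B.e n‖ := by rw [hxs]; exact norm_add_le _ _
        _ ≤ c₂ + ‖∑ n ∈ F, c n • B.e n‖ := by linarith [(hup a).1]
  have hSne : ‖B.e 0‖ ∈ S := by
    refine ⟨{0}, fun _ => 1, fun n => by norm_num, ?_⟩
    rw [Finset.sum_singleton, one_smul]
  have hbdd : BddAbove S := by
    refine ⟨Cl * c₂ / (1 - Cl), ?_⟩
    rintro r hr
    obtain ⟨r', hr'S, h1, h2⟩ := key r hr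
    have hr'0 := hSnonneg r' hr'S
    have h1c : (0:ℝ) < 1 - Cl := by linarith
    rw [le_div_iff₀ h1c]
    nlinarith [hSnonneg r hr]
  set Smax := sSup S with hSmax
  have hc₁S : c₁ ≤ Smax := le_trans (hlow 0).1 (le_csSup hbdd hSne)
  have hfin : Smax ≤ Cl * Smax := by
    apply csSup_le ⟨_, hSne⟩
    intro r hr
    obtain ⟨r', hr'S, h1, _⟩ := key r hr
    calc r ≤ Cl * r' := h1
      _ ≤ Cl * Smax := mul_le_mul_of_nonneg_left (le_csSup hbdd hr'S) hCl0.le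
  nlinarith

lemma BasisOf.convex_dom (t M : ℝ) (ht : 0 < t) (β : ℕ → 𝕜) :
    ∀ (F : Finset ℕ) (v : X), (∀ b ∈ F, ‖β b‖ ≤ t) →
    (∀ ε : ℕ → 𝕜, (∀ n, ‖ε n‖ = 1) → ‖v + ∑ n ∈ F, ((t : 𝕜) * ε n) • B.e n‖ ≤ M) →
    ‖v + ∑ n ∈ F, β n • B.e n‖ ≤ M := by
  classical
  intro F
  induction F using Finset.induction_on with
  | empty =>
    intro v _ h
    have h2 := h (fun _ => 1) (fun n => by norm_num)
    simpa using h2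
  | @insert a s ha ih =>
    intro v hβ h
    have haβ : ‖β a‖ ≤ t := hβ a (Finset.mem_insert_self a s)
    set r := ‖β a‖ with hr
    have hr0 : 0 ≤ r := norm_nonneg _
    set ω : 𝕜 := if β a = 0 then 1 else β a / (r : 𝕜) with hω
    have hωnorm : ‖ω‖ = 1 := by
      rw [hω]; split_ifs with h0
      · simp
      · rw [norm_div, RCLike.norm_ofReal, abs_of_nonneg hr0]
        rw [div_self (norm_ne_zero_iff.mpr h0)]
    have hβa : β a = (r : 𝕜) * ω := by
      rw [hω]; split_ifs with h0
      · simp [h0, hr]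
      · rw [mul_div_cancel₀]
        simp only [ne_eq, RCLike.ofReal_eq_zero, hr]
        simpa using h0
    set μ := (t + r) / (2 * t) with hμ
    have hμ0 : 0 ≤ μ := by positivity
    have hμ1 : μ ≤ 1 := by
      rw [hμ, div_le_one (by linarith)]; linarith
    have hx1 : ‖(v + ((t:𝕜) * ω) • B.e a) + ∑ n ∈ s, β n • B.e n‖ ≤ M := by
      apply ih (v + ((t:𝕜) * ω) • B.e a) (fun b hb => hβ b (Finset.mem_insert_of_mem hb))
      intro ε hε
      have hup : ∀ n, ‖Function.update ε a ω n‖ = 1 := by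
        intro n
        by_cases hn : n = a
        · subst hn; rw [Function.update_self]; exact hωnorm
        · rw [Function.update_of_ne hn]; exact hε n
      have h2 := h (Function.update ε a ω) hup
      rw [Finset.sum_insert ha, Function.update_self] at h2
      have hcongr : ∑ n ∈ s, ((t:𝕜) * Function.update ε a ω n) • B.e n
          = ∑ n ∈ s, ((t:𝕜) * ε n) • B.e n := by
        apply Finset.sum_congr rfl
        intro n hn
        rw [Function.update_of_ne (by rintro rfl; exact ha hn)]
      rw [hcongr] at h2
      rw [show v + ((t:𝕜) * ω) • B.e a + ∑ n ∈ s, ((t:𝕜) * ε n) • B.e n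
          = v + (((t:𝕜) * ω) • B.e a + ∑ n ∈ s, ((t:𝕜) * ε n) • B.e n) by abel]
      exact h2
    have hx2 : ‖(v + ((t:𝕜) * (-ω)) • B.e a) + ∑ n ∈ s, β n • B.e n‖ ≤ M := by
      apply ih (v + ((t:𝕜) * (-ω)) • B.e a) (fun b hb => hβ b (Finset.mem_insert_of_mem hb))
      intro ε hε
      have hup : ∀ n, ‖Function.update ε a (-ω) n‖ = 1 := by
        intro n
        by_cases hn : n = a
        · subst hn; rw [Function.update_self, norm_neg]; exact hωnorm
        · rw [Function.update_of_ne hn]; exact hε n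
      have h2 := h (Function.update ε a (-ω)) hup
      rw [Finset.sum_insert ha, Function.update_self] at h2
      have hcongr : ∑ n ∈ s, ((t:𝕜) * Function.update ε a (-ω) n) • B.e n
          = ∑ n ∈ s, ((t:𝕜) * ε n) • B.e n := by
        apply Finset.sum_congr rfl
        intro n hn
        rw [Function.update_of_ne (by rintro rfl; exact ha hn)]
      rw [hcongr] at h2
      rw [show v + ((t:𝕜) * (-ω)) • B.e a + ∑ n ∈ s, ((t:𝕜) * ε n) • B.e n
          = v + (((t:𝕜) * (-ω)) • B.e a + ∑ n ∈ s, ((t:𝕜) * ε n) • B.e n) by abel]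
      exact h2
    have hreal : μ * t - (1 - μ) * t = r := by
      rw [hμ]
      field_simp
      ring
    have hcast : ((μ:ℝ):𝕜) * ((t:ℝ):𝕜) - (1 - ((μ:ℝ):𝕜)) * ((t:ℝ):𝕜) = ((r:ℝ):𝕜) := by
      have h3 : ((μ * t - (1 - μ) * t : ℝ) : 𝕜) = ((r:ℝ) : 𝕜) := by rw [hreal]
      push_cast at h3
      linear_combination h3
    have hcomb : v + ∑ n ∈ insert a s, β n • B.e n
        = ((μ:ℝ) : 𝕜) • ((v + ((t:𝕜) * ω) • B.e a) + ∑ n ∈ s, β n • B.e n)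
          + (((1 - μ :ℝ)) : 𝕜) • ((v + ((t:𝕜) * (-ω)) • B.e a) + ∑ n ∈ s, β n • B.e n) := by
      rw [Finset.sum_insert ha, hβa]
      match_scalars
      all_goals push_cast
      all_goals first
        | ring1
        | linear_combination (-ω) * hcast
        | linear_combination ω * hcast
    rw [hcomb]
    calc ‖_ + _‖ ≤ ‖((μ:ℝ):𝕜) • ((v + ((t:𝕜) * ω) • B.e a) + ∑ n ∈ s, β n • B.e n)‖
        + ‖(((1 - μ:ℝ)):𝕜) • ((v + ((t:𝕜) * (-ω)) • B.e a) + ∑ n ∈ s, β n • B.e n)‖ :=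
          norm_add_le _ _
      _ = μ * ‖(v + ((t:𝕜) * ω) • B.e a) + ∑ n ∈ s, β n • B.e n‖
          + (1 - μ) * ‖(v + ((t:𝕜) * (-ω)) • B.e a) + ∑ n ∈ s, β n • B.e n‖ := by
          rw [norm_smul, norm_smul, RCLike.norm_ofReal, RCLike.norm_ofReal,
            abs_of_nonneg hμ0, abs_of_nonneg (by linarith : (0:ℝ) ≤ 1 - μ)]
      _ ≤ μ * M + (1 - μ) * M := add_le_add
          (mul_le_mul_of_nonneg_left hx1 hμ0)
          (mul_le_mul_of_nonneg_left hx2 (by linarith))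
      _ = M := by ring

lemma BasisOf.trunc (w : X) (M : ℝ) (φ : ℕ → 𝕜)
    (hw : ‖w‖ ≤ M)
    (hG : ∀ G : Finset ℕ, G.Nonempty → B.IsGreedySet w G → ‖w - B.proj G w‖ ≤ M) :
    ∀ (N : ℕ) (D : Finset ℕ), D.card ≤ N → ∀ t : ℝ, 0 < t →
    (∀ d ∈ D, t ≤ ‖B.coord d w‖) → (∀ n, n ∉ D → ‖B.coord n w‖ ≤ t) →
    (∀ d ∈ D, B.coord d w = (‖B.coord d w‖ : 𝕜) * φ d) →
    ‖w - B.proj D w + ∑ d ∈ D, ((t : 𝕜) * φ d) • B.e d‖ ≤ M := by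
  intro N
  induction N with
  | zero =>
    intro D hD t ht _ _ _
    have hDe : D = ∅ := Finset.card_eq_zero.mp (Nat.le_zero.mp hD)
    subst hDe
    simpa [BasisOf.proj] using hw
  | succ N ih =>
    intro D hD t ht hDlow hout hφ
    rcases D.eq_empty_or_nonempty with rfl | hne
    · simpa [BasisOf.proj] using hw
    obtain ⟨d₀, hd₀, hmin⟩ := D.exists_min_image (fun d => ‖B.coord d w‖) hne
    set r₀ := ‖B.coord d₀ w‖ with hr₀
    have htr₀ : t ≤ r₀ := hDlow d₀ hd₀
    have hr₀pos : 0 < r₀ := lt_of_lt_of_le ht htr₀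
    set D' := D.erase d₀ with hD'
    have hcard' : D'.card ≤ N := by
      have h2 : D'.card = D.card - 1 := by rw [hD']; exact Finset.card_erase_of_mem hd₀
      have h3 : 0 < D.card := Finset.card_pos.mpr hne
      omega
    have hIH : ‖w - B.proj D' w + ∑ d ∈ D', ((r₀ : 𝕜) * φ d) • B.e d‖ ≤ M := by
      apply ih D' hcard' r₀ hr₀pos
      · intro d hd
        exact hmin d (Finset.mem_of_mem_erase hd)
      · intro n hn
        by_cases hnd : n = d₀
        · subst hnd; exact le_refl _
        · have : n ∉ D := fun hnD => hn (Finset.mem_erase.mpr ⟨hnd, hnD⟩)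
          exact le_trans (hout n this) htr₀
      · intro d hd
        exact hφ d (Finset.mem_of_mem_erase hd)
    have hgr : B.IsGreedySet w D := fun a haD b hbD => le_trans (hout b hbD) (hDlow a haD)
    have hD0 : ‖w - B.proj D w‖ ≤ M := hG D hne hgr
    set μ := t / r₀ with hμ
    have hμ0 : 0 ≤ μ := by positivity
    have hμ1 : μ ≤ 1 := by
      rw [hμ, div_le_one hr₀pos]; exact htr₀
    have hsum1 : B.proj D w = B.proj D' w + B.coord d₀ w • B.e d₀ := by
      rw [BasisOf.proj, BasisOf.proj, ← Finset.sum_erase_add D _ hd₀]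
    have hsum2 : ∑ d ∈ D, ((t:𝕜) * φ d) • B.e d
        = (∑ d ∈ D', ((t:𝕜) * φ d) • B.e d) + ((t:𝕜) * φ d₀) • B.e d₀ :=
      (Finset.sum_erase_add D _ hd₀).symm
    have hc₀ : B.coord d₀ w = (r₀:𝕜) * φ d₀ := hφ d₀ hd₀
    have hsmulsum : ((μ:ℝ):𝕜) • ∑ d ∈ D', ((r₀:𝕜) * φ d) • B.e d
        = ∑ d ∈ D', ((t:𝕜) * φ d) • B.e d := by
      rw [Finset.smul_sum]
      apply Finset.sum_congr rfl
      intro d _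
      rw [smul_smul, ← mul_assoc]
      congr 2
      rw [← RCLike.ofReal_mul, hμ, div_mul_cancel₀ _ hr₀pos.ne']
    have hμr : ((1 - μ:ℝ):𝕜) * ((r₀:𝕜) * φ d₀) = ((r₀:𝕜) - (t:𝕜)) * φ d₀ := by
      rw [← mul_assoc]
      congr 1
      have hre : (1 - μ) * r₀ = r₀ - t := by
        rw [hμ]; field_simp
      calc ((1 - μ:ℝ):𝕜) * (r₀:𝕜) = (((1-μ) * r₀ : ℝ):𝕜) := by push_cast; ring
        _ = ((r₀ - t : ℝ):𝕜) := by rw [hre]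
        _ = (r₀:𝕜) - (t:𝕜) := by push_cast; ring
    have hone : ((μ:ℝ):𝕜) + ((1 - μ:ℝ):𝕜) = 1 := by push_cast; ring
    have hkey : w - B.proj D w + ∑ d ∈ D, ((t:𝕜) * φ d) • B.e d
        = ((μ:ℝ):𝕜) • (w - B.proj D' w + ∑ d ∈ D', ((r₀:𝕜) * φ d) • B.e d)
          + ((1 - μ:ℝ):𝕜) • (w - B.proj D w) := by
      rw [hsum2, hsum1, hc₀]
      rw [smul_add, hsmulsum, smul_sub, smul_sub, smul_add, smul_smul, hμr]
      match_scalars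
      all_goals push_cast
      all_goals ring1
    rw [hkey]
    calc ‖_ + _‖ ≤ ‖((μ:ℝ):𝕜) • (w - B.proj D' w + ∑ d ∈ D', ((r₀:𝕜) * φ d) • B.e d)‖
        + ‖((1 - μ:ℝ):𝕜) • (w - B.proj D w)‖ := norm_add_le _ _
      _ = μ * ‖w - B.proj D' w + ∑ d ∈ D', ((r₀:𝕜) * φ d) • B.e d‖
          + (1 - μ) * ‖w - B.proj D w‖ := by
          rw [norm_smul, norm_smul, RCLike.norm_ofReal, RCLike.norm_ofReal,
            abs_of_nonneg hμ0, abs_of_nonneg (by linarith : (0:ℝ) ≤ 1 - μ)]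
      _ ≤ μ * M + (1 - μ) * M := add_le_add
          (mul_le_mul_of_nonneg_left hIH hμ0)
          (mul_le_mul_of_nonneg_left hD0 (by linarith))
      _ = M := by ring

lemma BasisOf.proj_empty (x : X) : B.proj (∅ : Finset ℕ) x = 0 := by
  simp [BasisOf.proj]

lemma BasisOf.aux_qg {seq : ℕ → ℕ} {C : ℝ} (hC : B.CAGIIWith seq C) : B.SuppQGWith C := by
  intro x A hne hgr
  have hI : intervalSet seq 0 0 = ∅ := by simp [intervalSet]
  have h := hC x A.card (Finset.card_pos.mpr hne) A rfl hgr 0 0 ?_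
  · rw [hI, B.proj_empty, sub_zero] at h
    exact h
  · rw [hI]
    simp

lemma BasisOf.cagII_one_le {seq : ℕ → ℕ} {C : ℝ} (hseq : StrictMono seq)
    (hC : B.CAGIIWith seq C) : 1 ≤ C := by
  set x := B.e (seq 0) + B.e (seq 1) with hx
  have hne : seq 0 ≠ seq 1 := (hseq (by norm_num)).ne
  have hcoord : ∀ j, B.coord j x
      = (if j = seq 0 then 1 else 0) + (if j = seq 1 then 1 else 0) := by
    intro j; rw [hx, map_add, B.biorth, B.biorth]
  have hgr : B.IsGreedySet x {seq 0} := by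
    intro a ha b _
    simp only [Finset.mem_singleton] at ha
    subst ha
    rw [hcoord, hcoord]
    rw [if_pos rfl, if_neg hne, add_zero]
    by_cases h0 : b = seq 0 <;> by_cases h1 : b = seq 1 <;>
      simp [h0, h1, hne, Ne.symm hne]
  have hI : intervalSet seq 0 1 = {seq 0} := by
    simp [intervalSet]
  have hsub : ((↑(intervalSet seq 0 1) : Set ℕ) ∩ B.supp x).ncard ≤ 1 := by
    rw [hI]
    have hss : ((↑({seq 0} : Finset ℕ) : Set ℕ) ∩ B.supp x) ⊆ {seq 0} := by
      intro n hn
      simpa using hn.1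
    calc ((↑({seq 0} : Finset ℕ) : Set ℕ) ∩ B.supp x).ncard
        ≤ ({seq 0} : Set ℕ).ncard := Set.ncard_le_ncard hss (Set.finite_singleton _)
      _ = 1 := Set.ncard_singleton _
  have h := hC x 1 le_rfl {seq 0} (Finset.card_singleton _) hgr 0 1 hsub
  rw [hI] at h
  have hproj : B.proj {seq 0} x = B.e (seq 0) := by
    rw [BasisOf.proj, Finset.sum_singleton, hcoord]
    rw [if_pos rfl, if_neg hne, add_zero, one_smul]
  rw [hproj] at h
  have hxe : x - B.e (seq 0) = B.e (seq 1) := by rw [hx]; abel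
  rw [hxe] at h
  have h1 : 0 < ‖B.e (seq 1)‖ := B.e_norm_pos _
  nlinarith

lemma BasisOf.rslc_one_le {seq : ℕ → ℕ} {C : ℝ} (h : B.RSLCWith seq C) : 1 ≤ C := by
  have h0 := h (B.e 0) ?_ ∅ ∅ ⟨by simp, le_rfl⟩ (by simp) ?_ (fun _ => 1) (fun _ => 1)
    (fun n => by norm_num) (fun n => by norm_num)
  · have hs : B.sgnSum (fun _ => (1:𝕜)) ∅ = 0 := by simp [BasisOf.sgnSum]
    rw [hs, add_zero] at h0
    have h1 : 0 < ‖B.e 0‖ := B.e_norm_pos 0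
    nlinarith
  · intro n
    rw [B.biorth]
    split_ifs <;> norm_num
  · intro j _ _
    left
    intro a ha
    exact absurd ha (Finset.notMem_empty a)

lemma BasisOf.aux_rslc {seq : ℕ → ℕ} {C : ℝ} (hseq : StrictMono seq)
    (hC : B.CAGIIWith seq C) : B.RSLCWith seq C := by
  classical
  have hC1 : 1 ≤ C := B.cagII_one_le hseq hC
  intro x hx A D hSP hD hside ε δ hε hδ
  obtain ⟨hArange, hcard⟩ := hSP
  have hAx : ∀ a ∈ A, B.coord a x = 0 := by
    intro a ha
    by_contra hne0
    have hrange : (a:ℕ) ∈ Set.range seq := hArange ha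
    rcases hside a (Or.inr hne0) hrange with h1 | h2
    · exact lt_irrefl a (h1 a ha)
    · exact lt_irrefl a (h2 a ha)
  have hAD : ∀ a ∈ A, a ∉ D := by
    intro a ha haD
    have hrange : (a:ℕ) ∈ Set.range seq := hArange ha
    rcases hside a (Or.inl haD) hrange with h1 | h2
    · exact lt_irrefl a (h1 a ha)
    · exact lt_irrefl a (h2 a ha)
  set y := x + B.sgnSum ε A + B.sgnSum δ D with hy
  have hcy : ∀ j, B.coord j y
      = B.coord j x + (if j ∈ A then ε j else 0) + (if j ∈ D then δ j else 0) := by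
    intro j; rw [hy, map_add, map_add, B.coord_sgnSum, B.coord_sgnSum]
  rcases D.eq_empty_or_nonempty with rfl | hDne
  · have hA : A = ∅ := Finset.card_eq_zero.mp (Nat.le_zero.mp hcard)
    subst hA
    simp only [BasisOf.sgnSum, Finset.sum_empty, add_zero]
    nlinarith [norm_nonneg x]
  · have hgrD : B.IsGreedySet y D := by
      intro a ha b hb
      have hcda : B.coord a y = δ a := by
        rw [hcy, hD a ha, if_neg (fun hA' => hAD a hA' ha), if_pos ha]
        ring
      rw [hcda, hδ a, hcy b]
      by_cases hbA : b ∈ A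
      · rw [hAx b hbA, if_pos hbA, if_neg hb]
        simp [hε b]
      · rw [if_neg hbA, if_neg hb]
        simpa using hx b
    have hprojD : B.proj D y = B.sgnSum δ D := by
      rw [BasisOf.proj, BasisOf.sgnSum]
      apply Finset.sum_congr rfl
      intro d hd
      rw [hcy, hD d hd, if_neg (fun hA' => hAD d hA' hd), if_pos hd, zero_add, zero_add]
    have hm : 1 ≤ D.card := Finset.card_pos.mpr hDne
    have e1 : y - B.sgnSum δ D = x + B.sgnSum ε A := by rw [hy]; abel
    rcases A.eq_empty_or_nonempty with rfl | hAne
    · have hI : intervalSet seq 0 0 = ∅ := by simp [intervalSet]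
      have h := hC y D.card hm D rfl hgrD 0 0 ?_
      · rw [hI, B.proj_empty, sub_zero, hprojD, e1] at h
        have hyx : y = x + B.sgnSum δ D := by
          rw [hy]
          simp [BasisOf.sgnSum]
        rw [hyx] at h
        simpa [BasisOf.sgnSum] using h
      · rw [hI]
        simp
    · set idx : ℕ → ℕ := fun a => sInf {i | seq i = a} with hidx
      have hidx_eq : ∀ a ∈ A, seq (idx a) = a := by
        intro a ha
        obtain ⟨i, hi⟩ := hArange ha
        have hne' : {j | seq j = a}.Nonempty := ⟨i, hi⟩
        have h2 : seq (sInf {j | seq j = a}) = a := Nat.sInf_mem hne'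
        simp only [hidx]
        exact h2
      set T := A.image idx with hT
      have hTne : T.Nonempty := hAne.image idx
      set k := T.min' hTne with hk
      set K := T.max' hTne with hK
      have hkK : k ≤ K := T.min'_le _ (T.max'_mem hTne)
      set p := K - k + 1 with hp
      set I := intervalSet seq k p with hI
      have hmemI : ∀ n, n ∈ I ↔ ∃ i, i < p ∧ seq (k + i) = n := by
        intro n
        simp [hI, intervalSet]
      have hseqkA : seq k ∈ A := by
        have hmem : k ∈ T := T.min'_mem hTne
        rw [hT] at hmem
        obtain ⟨a, haA, hak⟩ := Finset.mem_image.mp hmem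
        rw [← hak, hidx_eq a haA]
        exact haA
      have hseqKA : seq K ∈ A := by
        have hmem : K ∈ T := T.max'_mem hTne
        rw [hT] at hmem
        obtain ⟨a, haA, hak⟩ := Finset.mem_image.mp hmem
        rw [← hak, hidx_eq a haA]
        exact haA
      have hAI : A ⊆ I := by
        intro a ha
        have h1 : idx a ∈ T := by rw [hT]; exact Finset.mem_image_of_mem idx ha
        have h2 : k ≤ idx a := T.min'_le _ h1
        have h3 : idx a ≤ K := T.le_max' _ h1
        rw [hmemI]
        refine ⟨idx a - k, by omega, ?_⟩
        rw [Nat.add_sub_cancel' h2, hidx_eq a ha]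
      have hIbound : ∀ n ∈ I, seq k ≤ n ∧ n ≤ seq K := by
        intro n hn
        rw [hmemI] at hn
        obtain ⟨i, hip, rfl⟩ := hn
        exact ⟨hseq.monotone (Nat.le_add_right k i), hseq.monotone (by omega)⟩
      have hIsupp : ∀ n ∈ I, B.coord n y ≠ 0 → n ∈ A := by
        intro n hnI hny
        by_contra hnA
        have hjD : n ∈ D ∨ B.coord n x ≠ 0 := by
          by_cases hnD : n ∈ D
          · exact Or.inl hnD
          · right
            intro h0
            apply hny
            rw [hcy, h0, if_neg hnA, if_neg hnD]
            ring
        have hnrange : n ∈ Set.range seq := by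
          rw [hmemI] at hnI
          obtain ⟨i, _, rfl⟩ := hnI
          exact ⟨k + i, rfl⟩
        obtain ⟨h1, h2⟩ := hIbound n hnI
        rcases hside n hjD hnrange with hs1 | hs2
        · exact absurd (hs1 (seq k) hseqkA) (by omega)
        · exact absurd (hs2 (seq K) hseqKA) (by omega)
      have hprojI : B.proj I y = B.sgnSum ε A := by
        rw [BasisOf.proj, BasisOf.sgnSum]
        rw [← Finset.sum_subset hAI (fun n hnI hnA => ?_)]
        · apply Finset.sum_congr rfl
          intro a ha
          rw [hcy, hAx a ha, if_pos ha, if_neg (hAD a ha), zero_add, add_zero]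
        · by_cases h0 : B.coord n y = 0
          · rw [h0, zero_smul]
          · exact absurd (hIsupp n hnI h0) hnA
      have hncard : ((↑I : Set ℕ) ∩ B.supp y).ncard ≤ D.card := by
        have hsub : ((↑I : Set ℕ) ∩ B.supp y) ⊆ ↑A := by
          rintro n ⟨hnI, hny⟩
          exact hIsupp n hnI hny
        calc ((↑I : Set ℕ) ∩ B.supp y).ncard
            ≤ (↑A : Set ℕ).ncard := Set.ncard_le_ncard hsub A.finite_toSet
          _ = A.card := Set.ncard_coe_finset A
          _ ≤ D.card := hcard
      have h := hC y D.card hm D rfl hgrD k p hncard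
      rw [← hI, hprojI, hprojD, e1] at h
      have e2 : y - B.sgnSum ε A = x + B.sgnSum δ D := by rw [hy]; abel
      rw [e2] at h
      exact h

lemma BasisOf.aux_main {seq : ℕ → ℕ} {Cl Crs : ℝ} (hseq : StrictMono seq)
    (hl : B.SuppQGWith Cl) (hrs : B.RSLCWith seq Crs) : B.CAGIIWith seq (Cl * Crs) := by
  classical
  have hCl1 : 1 ≤ Cl := B.suppQG_one_le hl
  have hCrs1 : 1 ≤ Crs := B.rslc_one_le hrs
  have hCC1 : 1 ≤ Cl * Crs := by nlinarith
  intro x m hm A hcardA hgr k p hncard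
  set I := intervalSet seq k p with hI
  have hmemI : ∀ n, n ∈ I ↔ ∃ i, i < p ∧ seq (k + i) = n := by
    intro n
    simp [hI, intervalSet]
  have hInotmem : ∀ j, j ∉ I → ∀ s₀, seq s₀ = j → s₀ < k ∨ k + p ≤ s₀ := by
    intro j hj s₀ hs₀
    by_contra hcon
    push_neg at hcon
    obtain ⟨h1, h2⟩ := hcon
    exact hj ((hmemI j).mpr ⟨s₀ - k, by omega, by rw [Nat.add_sub_cancel' (by omega : k ≤ s₀)]; exact hs₀⟩)
  set B' := (I \ A).filter (fun n => B.coord n x ≠ 0) with hB'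
  set D := (A \ I).filter (fun n => B.coord n x ≠ 0) with hDdef
  set u := x - B.proj (A ∪ I) x with hu
  have hcu : ∀ n, B.coord n u = if n ∈ A ∪ I then 0 else B.coord n x := by
    intro n
    rw [hu, map_sub, B.coord_proj]
    split_ifs with h <;> simp
  have hsplit1 : B.proj (A ∪ I) x = B.proj A x + B.proj (I \ A) x := by
    rw [BasisOf.proj, BasisOf.proj, BasisOf.proj, ← Finset.sum_union Finset.disjoint_sdiff,
      Finset.union_sdiff_self_eq_union]
  have hsplit2 : B.proj (A ∪ I) x = B.proj I x + B.proj (A \ I) x := by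
    rw [BasisOf.proj, BasisOf.proj, BasisOf.proj, ← Finset.sum_union Finset.disjoint_sdiff,
      Finset.union_sdiff_self_eq_union, Finset.union_comm]
  have hfiltB : B.proj (I \ A) x = B.proj B' x := by
    rw [BasisOf.proj, BasisOf.proj, hB']
    refine (Finset.sum_filter_of_ne ?_).symm
    intro n _ hne0 h0
    exact hne0 (by rw [h0, zero_smul])
  have hfiltD : B.proj (A \ I) x = B.proj D x := by
    rw [BasisOf.proj, BasisOf.proj, hDdef]
    refine (Finset.sum_filter_of_ne ?_).symm
    intro n _ hne0 h0
    exact hne0 (by rw [h0, zero_smul])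
  have hcount : B'.card ≤ D.card := by
    by_cases hAz : ∀ a ∈ A, B.coord a x ≠ 0
    · have hDfull : D = A \ I := by
        rw [hDdef]
        apply Finset.filter_true_of_mem
        intro a ha
        exact hAz a (Finset.mem_sdiff.mp ha).1
      have hIcoe : ((↑I : Set ℕ) ∩ B.supp x)
          = ↑(I.filter (fun n => B.coord n x ≠ 0)) := by
        ext n
        simp only [Set.mem_inter_iff, Finset.coe_filter, Set.mem_setOf_eq, Finset.mem_coe,
          BasisOf.supp]
      have hIf : (I.filter (fun n => B.coord n x ≠ 0)).card ≤ m := by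
        rw [← Set.ncard_coe_finset, ← hIcoe]
        exact hncard
      have hsub : B' ∪ (A ∩ I) ⊆ I.filter (fun n => B.coord n x ≠ 0) := by
        intro n hn
        rcases Finset.mem_union.mp hn with h | h
        · rw [hB', Finset.mem_filter] at h
          exact Finset.mem_filter.mpr ⟨(Finset.mem_sdiff.mp h.1).1, h.2⟩
        · obtain ⟨hnA, hnI⟩ := Finset.mem_inter.mp h
          exact Finset.mem_filter.mpr ⟨hnI, hAz n hnA⟩
      have hdisj : Disjoint B' (A ∩ I) := by
        rw [Finset.disjoint_left]
        intro n hn hn2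
        rw [hB', Finset.mem_filter] at hn
        exact (Finset.mem_sdiff.mp hn.1).2 (Finset.mem_inter.mp hn2).1
      have h1 : B'.card + (A ∩ I).card ≤ m := by
        rw [← Finset.card_union_of_disjoint hdisj]
        exact le_trans (Finset.card_le_card hsub) hIf
      have h2 : (A \ I).card + (A ∩ I).card = m := by
        rw [Finset.card_sdiff_add_card_inter]
        exact hcardA
      rw [hDfull]
      omega
    · push_neg at hAz
      obtain ⟨a₀, ha₀A, ha₀⟩ := hAz
      have hBempty : B' = ∅ := by
        rw [hB', Finset.filter_eq_empty_iff]
        intro n hn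
        simp only [ne_eq, not_not]
        have hnA : n ∉ A := (Finset.mem_sdiff.mp hn).2
        have hle := hgr a₀ ha₀A n hnA
        rw [ha₀] at hle
        exact norm_le_zero_iff.mp (by simpa using hle)
      rw [hBempty]
      simp
  rcases D.eq_empty_or_nonempty with hDe | hDne
  · have hBe : B' = ∅ := by
      have h0 : D.card = 0 := by rw [hDe]; rfl
      exact Finset.card_eq_zero.mp (by omega)
    have hxA : x - B.proj A x = u := by
      rw [hu, hsplit1, hfiltB, hBe, B.proj_empty, add_zero]
    have hxI : x - B.proj I x = u := by
      rw [hu, hsplit2, hfiltD, hDe, B.proj_empty, add_zero]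
    rw [hxA, hxI]
    calc ‖u‖ = 1 * ‖u‖ := (one_mul _).symm
      _ ≤ (Cl * Crs) * ‖u‖ := mul_le_mul_of_nonneg_right hCC1 (norm_nonneg u)
  · obtain ⟨d₀, hd₀, hmin⟩ := D.exists_min_image (fun d => ‖B.coord d x‖) hDne
    have hd₀AI : d₀ ∈ A \ I := (Finset.mem_filter.mp hd₀).1
    have hd₀A : d₀ ∈ A := (Finset.mem_sdiff.mp hd₀AI).1
    have hd₀I : d₀ ∉ I := (Finset.mem_sdiff.mp hd₀AI).2
    have hd₀ne : B.coord d₀ x ≠ 0 := (Finset.mem_filter.mp hd₀).2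
    set t := ‖B.coord d₀ x‖ with ht
    have htpos : 0 < t := norm_pos_iff.mpr hd₀ne
    set ph : ℕ → 𝕜 := fun n =>
      if B.coord n x = 0 then 1 else B.coord n x / (‖B.coord n x‖ : 𝕜) with hph
    have hph1 : ∀ n, ‖ph n‖ = 1 := by
      intro n
      simp only [hph]
      split_ifs with h0
      · simp
      · rw [norm_div, RCLike.norm_ofReal, abs_of_nonneg (norm_nonneg _),
          div_self (norm_ne_zero_iff.mpr h0)]
    have hphd : ∀ n, B.coord n x ≠ 0 → B.coord n x = (‖B.coord n x‖ : 𝕜) * ph n := by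
      intro n hne0
      simp only [hph]
      rw [if_neg hne0, mul_comm, div_mul_cancel₀ _ (RCLike.ofReal_ne_zero.mpr
        (norm_ne_zero_iff.mpr hne0))]
    have hout : ∀ n, n ∉ A → ‖B.coord n x‖ ≤ t := fun n hn => hgr d₀ hd₀A n hn
    have hu_small : ∀ n, ‖B.coord n u‖ ≤ t := by
      intro n
      rw [hcu]
      split_ifs with hmem
      · simp [htpos.le]
      · exact hout n (fun hnA => hmem (Finset.mem_union_left _ hnA))
    have huD : ∀ d ∈ D, B.coord d u = 0 := by
      intro d hd
      rw [hcu, if_pos (Finset.mem_union_left _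
        (Finset.mem_sdiff.mp (Finset.mem_filter.mp hd).1).1)]
    have hstepA : ∀ ε' : ℕ → 𝕜, (∀ n, ‖ε' n‖ = 1) →
        ‖u + ∑ b ∈ B', ((t:𝕜) * ε' b) • B.e b‖
          ≤ Crs * ‖u + ∑ d ∈ D, ((t:𝕜) * ph d) • B.e d‖ := by
      intro ε' hε'
      have htk : ((t:ℝ):𝕜) ≠ 0 := RCLike.ofReal_ne_zero.mpr htpos.ne'
      set x' := ((t:𝕜))⁻¹ • u with hx'
      have hsc : (t:𝕜) • x' = u := smul_inv_smul₀ htk u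
      have hcoordx' : ∀ n, B.coord n x' = ((t:𝕜))⁻¹ * B.coord n u := by
        intro n
        rw [hx', map_smul, smul_eq_mul]
      have hx'c : ∀ n, ‖B.coord n x'‖ ≤ 1 := by
        intro n
        rw [hcoordx', norm_mul, norm_inv, RCLike.norm_ofReal, abs_of_nonneg htpos.le]
        rw [inv_mul_le_iff₀ htpos, mul_one]
        exact hu_small n
      have hSPx : SPair seq B' D := by
        refine ⟨?_, hcount⟩
        intro b hb
        have hbI : b ∈ I := (Finset.mem_sdiff.mp
          (Finset.mem_filter.mp (Finset.mem_coe.mp hb)).1).1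
        obtain ⟨i, _, rfl⟩ := (hmemI b).mp hbI
        exact ⟨k + i, rfl⟩
      have hDz : ∀ d ∈ D, B.coord d x' = 0 := by
        intro d hd
        rw [hcoordx', huD d hd, mul_zero]
      have hsidec : ∀ j, (j ∈ D ∨ B.coord j x' ≠ 0) → j ∈ Set.range seq →
          (∀ b ∈ B', j < b) ∨ (∀ b ∈ B', b < j) := by
        intro j hj hrange
        have hjI : j ∉ I := by
          rcases hj with hjD | hjne
          · exact (Finset.mem_sdiff.mp (Finset.mem_filter.mp hjD).1).2
          · intro hjI
            apply hjne
            rw [hcoordx', hcu, if_pos (Finset.mem_union_right _ hjI), mul_zero]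
        obtain ⟨s₀, hs₀⟩ := hrange
        rcases hInotmem j hjI s₀ hs₀ with hlt | hge
        · left
          intro b hb
          have hbI : b ∈ I := (Finset.mem_sdiff.mp (Finset.mem_filter.mp hb).1).1
          obtain ⟨i, hip, rfl⟩ := (hmemI b).mp hbI
          rw [← hs₀]
          exact hseq (by omega)
        · right
          intro b hb
          have hbI : b ∈ I := (Finset.mem_sdiff.mp (Finset.mem_filter.mp hb).1).1
          obtain ⟨i, hip, rfl⟩ := (hmemI b).mp hbI
          rw [← hs₀]
          exact hseq (by omega)
      have h := hrs x' hx'c B' D hSPx hDz hsidec ε' ph hε' hph1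
      have he1 : u + ∑ b ∈ B', ((t:𝕜) * ε' b) • B.e b
          = (t:𝕜) • (x' + B.sgnSum ε' B') := by
        rw [smul_add, hsc, BasisOf.sgnSum, Finset.smul_sum]
        congr 1
        refine Finset.sum_congr rfl (fun b _ => ?_)
        rw [smul_smul]
      have he2 : u + ∑ d ∈ D, ((t:𝕜) * ph d) • B.e d
          = (t:𝕜) • (x' + B.sgnSum ph D) := by
        rw [smul_add, hsc, BasisOf.sgnSum, Finset.smul_sum]
        congr 1
        refine Finset.sum_congr rfl (fun b _ => ?_)
        rw [smul_smul]
      rw [he1, he2, norm_smul, norm_smul, RCLike.norm_ofReal, abs_of_nonneg htpos.le]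
      rw [show Crs * (t * ‖x' + B.sgnSum ph D‖) = t * (Crs * ‖x' + B.sgnSum ph D‖) by ring]
      exact mul_le_mul_of_nonneg_left h htpos.le
    have hstepB : ‖x - B.proj A x‖
        ≤ Crs * ‖u + ∑ d ∈ D, ((t:𝕜) * ph d) • B.e d‖ := by
      have hxA : x - B.proj A x = u + B.proj B' x := by
        rw [hu, hsplit1, hfiltB]
        abel
      rw [hxA, BasisOf.proj]
      refine B.convex_dom t _ htpos (fun n => B.coord n x) B' u ?_ hstepA
      intro b hb
      exact hout b (Finset.mem_sdiff.mp (Finset.mem_filter.mp hb).1).2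
    set w := x - B.proj I x with hw
    have hcw : ∀ n, B.coord n w = if n ∈ I then 0 else B.coord n x := by
      intro n
      rw [hw, map_sub, B.coord_proj]
      split_ifs with h <;> simp
    have hwD : ∀ d ∈ D, B.coord d w = B.coord d x := by
      intro d hd
      rw [hcw, if_neg (Finset.mem_sdiff.mp (Finset.mem_filter.mp hd).1).2]
    have hstepC : ‖u + ∑ d ∈ D, ((t:𝕜) * ph d) • B.e d‖ ≤ Cl * ‖w‖ := by
      have hwM : ‖w‖ ≤ Cl * ‖w‖ := by nlinarith [norm_nonneg w]
      have htr := B.trunc w (Cl * ‖w‖) ph hwM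
        (fun G hGne hGgr => hl w G hGne hGgr) D.card D le_rfl t htpos ?_ ?_ ?_
      · have hprojDw : B.proj D w = B.proj D x := by
          rw [BasisOf.proj, BasisOf.proj]
          refine Finset.sum_congr rfl (fun d hd => ?_)
          rw [hwD d hd]
        have huw : w - B.proj D w = u := by
          rw [hprojDw, hw, hu, hsplit2, hfiltD]
          abel
        rw [huw] at htr
        exact htr
      · intro d hd
        rw [hwD d hd]
        exact hmin d hd
      · intro n hn
        rw [hcw]
        split_ifs with hnI
        · simp [htpos.le]
        · by_cases hnA : n ∈ A
          · have hnAI : n ∈ A \ I := Finset.mem_sdiff.mpr ⟨hnA, hnI⟩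
            have : B.coord n x = 0 := by
              by_contra hne0
              exact hn (Finset.mem_filter.mpr ⟨hnAI, hne0⟩)
            rw [this]
            simp [htpos.le]
          · exact hout n hnA
      · intro d hd
        rw [hwD d hd]
        exact hphd d (Finset.mem_filter.mp hd).2
    calc ‖x - B.proj A x‖ ≤ Crs * ‖u + ∑ d ∈ D, ((t:𝕜) * ph d) • B.e d‖ := hstepB
      _ ≤ Crs * (Cl * ‖w‖) := mul_le_mul_of_nonneg_left hstepC (by linarith)
      _ = Cl * Crs * ‖x - B.proj I x‖ := by rw [← hw]; ring

end Helpers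

/-- (i) A `C`-CAG(𝐧, II) basis is `C`-suppression quasi-greedy and
`C`-(𝐧, RSLC); (ii) a `C_ℓ`-suppression quasi-greedy, `C_rs`-(𝐧, RSLC) basis is
`(C_ℓ·C_rs)`-CAG(𝐧, II). -/
theorem statement14 {𝕜 X : Type*} [RCLike 𝕜] [NormedAddCommGroup X] [NormedSpace 𝕜 X]
    [CompleteSpace X] (B : BasisOf 𝕜 X) (seq : ℕ → ℕ) (hseq : StrictMono seq) :
    (∀ C : ℝ, B.CAGIIWith seq C → B.SuppQGWith C ∧ B.RSLCWith seq C) ∧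
    (∀ Cl Crs : ℝ, B.SuppQGWith Cl → B.RSLCWith seq Crs →
      B.CAGIIWith seq (Cl * Crs)) := by
  constructor
  · intro C hC
    exact ⟨B.aux_qg hC, B.aux_rslc hseq hC⟩
  · intro Cl Crs hl hrs
    exact B.aux_main hseq hl hrs
end

section
/- Let 𝓑 be a basis of a Banach space X and 𝐧 a strictly increasing sequence of positive integers. Then 𝓑 is 1-(𝐧, almost greedy) if and only if 𝓑 is 1-(𝐧, SLC). -/
open scoped BigOperators ENNReal NNReal

/-!
Almost greedy ⇒ SLC: for `u = x + 1_{εA} + 1_{δB}` the set `B` is a greedy set of `u`;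
comparing it with `A ∪ F`, where `F ⊆ 𝐧` is a block of `|B| - |A|` consecutive terms of `𝐧`
pushed off to infinity, gives `‖x + 1_{εA}‖ ≤ ‖x + 1_{δB} - P_F x‖`, and `P_F x → 0` because the
coefficients of `x` tend to zero (the span of the basis is dense).

SLC ⇒ almost greedy: for a greedy set `A` of `x` and `D ⊆ 𝐧` with `|D| = |A|`, put
`y = x - P_{A ∪ D} x`; one has to show `‖y + P_{D \ A} x‖ ≤ ‖y + P_{A \ D} x‖`. The coefficients
are exchanged one at a time, each time bringing in the element of `A \ D` with the smallest
coefficient, so that all coefficients of the new `y` stay below those still to be exchanged.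
A single exchange is SLC for singletons, once the outgoing coefficient `γ` is moved to the circle
`|γ| = |c|`: this does not decrease the norm, since `γ ↦ ‖z + γ e‖` is convex and the disc is the
convex hull of its boundary.
-/

open Filter Topology

section Convexity

variable {𝕜 E : Type*} [RCLike 𝕜] [NormedAddCommGroup E] [NormedSpace 𝕜 E]

theorem convexOn_norm_add_smul (x v : E) :
    ConvexOn ℝ Set.univ fun γ : 𝕜 => ‖x + γ • v‖ := by
  refine ⟨convex_univ, fun a _ b _ s t hs ht hst => ?_⟩
  have hsplit : x + (s • a + t • b) • v = (s : 𝕜) • (x + a • v) + (t : 𝕜) • (x + b • v) := by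
    have hst' : (s : 𝕜) + t = 1 := by exact_mod_cast hst
    simp only [RCLike.real_smul_eq_coe_mul, smul_add, add_smul, smul_smul]
    rw [add_add_add_comm, ← add_smul _ _ v, ← add_smul (s : 𝕜) t x, hst', one_smul]
  dsimp only
  rw [hsplit, smul_eq_mul, smul_eq_mul]
  refine (norm_add_le _ _).trans_eq ?_
  rw [norm_smul, norm_smul, RCLike.norm_ofReal, RCLike.norm_ofReal, abs_of_nonneg hs,
    abs_of_nonneg ht]

theorem exists_norm_eq_and_norm_add_smul_le (x v : E) {γ : 𝕜} {s : ℝ} (hγ : ‖γ‖ ≤ s) :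
    ∃ α : 𝕜, ‖α‖ = s ∧ ‖x + γ • v‖ ≤ ‖x + α • v‖ := by
  have hmem : γ ∈ convexHull ℝ (Metric.sphere (0 : 𝕜) s) := by
    rw [convexHull_sphere_eq_closedBall 0 ((norm_nonneg γ).trans hγ)]
    simpa using hγ
  obtain ⟨α, hα, hle⟩ :=
    (convexOn_norm_add_smul x v).exists_ge_of_mem_convexHull (Set.subset_univ _) hmem
  exact ⟨α, by simpa using hα, hle⟩

end Convexity

theorem intervalSet_subset_range (seq : ℕ → ℕ) (k r : ℕ) :
    (↑(intervalSet seq k r) : Set ℕ) ⊆ Set.range seq := by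
  intro n hn
  obtain ⟨i, -, rfl⟩ := Finset.mem_image.mp hn
  exact ⟨k + i, rfl⟩

theorem card_intervalSet {seq : ℕ → ℕ} (hseq : StrictMono seq) (k r : ℕ) :
    (intervalSet seq k r).card = r := by
  rw [intervalSet, Finset.card_image_of_injective _ fun i j h => add_left_cancel (hseq.injective h),
    Finset.card_range]

theorem eventually_disjoint_intervalSet {seq : ℕ → ℕ} (hseq : StrictMono seq) (r : ℕ)
    (S : Finset ℕ) : ∀ᶠ k in atTop, Disjoint (intervalSet seq k r) S := by
  filter_upwards [eventually_gt_atTop (S.sup id)] with k hk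
  refine Finset.disjoint_left.mpr fun n hn hnS => ?_
  obtain ⟨i, -, rfl⟩ := Finset.mem_image.mp hn
  have : seq (k + i) ≤ S.sup id := Finset.le_sup (f := id) hnS
  have : k + i ≤ seq (k + i) := hseq.le_apply
  omega

namespace BasisOf

variable {𝕜 X : Type*} [RCLike 𝕜] [NormedAddCommGroup X] [NormedSpace 𝕜 X]

section Coordinates

variable (B : BasisOf 𝕜 X)

theorem coord_smul_e (c : 𝕜) (b j : ℕ) : B.coord j (c • B.e b) = if j = b then c else 0 := by
  simp [B.biorth]

theorem coord_sum_smul_e (F : Finset ℕ) (f : ℕ → 𝕜) (j : ℕ) :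
    B.coord j (∑ n ∈ F, f n • B.e n) = if j ∈ F then f j else 0 := by
  simp only [map_sum, coord_smul_e]
  exact Finset.sum_ite_eq F j f

theorem coord_proj_s15 (F : Finset ℕ) (x : X) (j : ℕ) :
    B.coord j (B.proj F x) = if j ∈ F then B.coord j x else 0 :=
  B.coord_sum_smul_e F _ j

theorem coord_sgnSum_s15 (ε : ℕ → 𝕜) (F : Finset ℕ) (j : ℕ) :
    B.coord j (B.sgnSum ε F) = if j ∈ F then ε j else 0 :=
  B.coord_sum_smul_e F ε j

theorem eventually_coord_eq_zero_of_mem_span {v : X}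
    (hv : v ∈ Submodule.span 𝕜 (Set.range B.e)) : ∀ᶠ n in atTop, B.coord n v = 0 := by
  induction hv using Submodule.span_induction with
  | mem _ h =>
    obtain ⟨k, rfl⟩ := h
    filter_upwards [eventually_gt_atTop k] with n hn
    rw [B.biorth, if_neg hn.ne']
  | zero => exact Eventually.of_forall fun n => map_zero _
  | add _ _ _ _ hv hw => filter_upwards [hv, hw] with n h₁ h₂; rw [map_add, h₁, h₂, add_zero]
  | smul c _ _ hv => filter_upwards [hv] with n h; rw [map_smul, h, smul_zero]

theorem tendsto_coord_atTop (x : X) : Tendsto (fun n => B.coord n x) atTop (𝓝 0) := by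
  obtain ⟨c₁, c₂, hc₁, hlow, hup⟩ := B.norm_bounds
  have hc₂ : 0 < c₂ := hc₁.trans_le ((hlow 0).2.trans (hup 0).2)
  refine NormedAddGroup.tendsto_nhds_zero.mpr fun η hη => ?_
  obtain ⟨v, hv, hxv⟩ := Metric.mem_closure_iff.mp (B.dense_span x) (η / c₂) (div_pos hη hc₂)
  filter_upwards [B.eventually_coord_eq_zero_of_mem_span hv] with n hn
  calc ‖B.coord n x‖ = ‖B.coord n (x - v)‖ := by rw [map_sub, hn, sub_zero]
    _ ≤ c₂ * ‖x - v‖ := ((B.coord n).le_opNorm _).trans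
        (mul_le_mul_of_nonneg_right (hup n).2 (norm_nonneg _))
    _ < c₂ * (η / c₂) := mul_lt_mul_of_pos_left (by rwa [← dist_eq_norm]) hc₂
    _ = η := mul_div_cancel₀ η hc₂.ne'

theorem tendsto_coord_smul_e_atTop (x : X) :
    Tendsto (fun n => B.coord n x • B.e n) atTop (𝓝 0) := by
  obtain ⟨c₁, c₂, -, -, hup⟩ := B.norm_bounds
  exact (B.tendsto_coord_atTop x).zero_smul_isBoundedUnder_le
    (isBoundedUnder_of ⟨c₂, fun n => (hup n).1⟩)

theorem tendsto_proj_intervalSet_atTop {seq : ℕ → ℕ} (hseq : StrictMono seq) (r : ℕ) (x : X) :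
    Tendsto (fun k => B.proj (intervalSet seq k r) x) atTop (𝓝 0) := by
  have hsum : ∀ k, B.proj (intervalSet seq k r) x =
      ∑ i ∈ Finset.range r, B.coord (seq (k + i)) x • B.e (seq (k + i)) := fun k =>
    Finset.sum_image fun i _ j _ h => add_left_cancel (hseq.injective h)
  simp_rw [hsum]
  simpa using tendsto_finsetSum (Finset.range r) fun i _ =>
    (B.tendsto_coord_smul_e_atTop x).comp (hseq.tendsto_atTop.comp (tendsto_add_atTop_nat i))

end Coordinates

variable {B : BasisOf 𝕜 X} {seq : ℕ → ℕ}

theorem SLCWith.norm_add_smul_le_of_norm_eq {C : ℝ} (hS : B.SLCWith seq C) {x : X} {t : ℝ}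
    (ht : 0 < t) (hx : ∀ n, ‖B.coord n x‖ ≤ t) {a b : ℕ} (ha : a ∈ Set.range seq) (hab : a ≠ b)
    (hxa : B.coord a x = 0) (hxb : B.coord b x = 0) {α β : 𝕜} (hα : ‖α‖ = t) (hβ : ‖β‖ = t) :
    ‖x + α • B.e a‖ ≤ C * ‖x + β • B.e b‖ := by
  have ht' : (t : 𝕜) ≠ 0 := RCLike.ofReal_ne_zero.mpr ht.ne'
  have hnorm : ∀ γ : 𝕜, ‖γ‖ = t → ‖γ / t‖ = 1 := fun γ hγ => by
    rw [norm_div, RCLike.norm_ofReal, abs_of_pos ht, hγ, div_self ht.ne']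
  have hrescale : ∀ (n : ℕ) (γ : 𝕜),
      ‖x + γ • B.e n‖ = t * ‖(t : 𝕜)⁻¹ • x + B.sgnSum (fun _ => γ / t) {n}‖ := fun n γ => by
    calc ‖x + γ • B.e n‖ = ‖(t : 𝕜) • ((t : 𝕜)⁻¹ • x + (γ / t) • B.e n)‖ := by
          rw [smul_add, smul_inv_smul₀ ht', smul_smul, mul_div_cancel₀ _ ht']
      _ = _ := by rw [sgnSum, Finset.sum_singleton, norm_smul, RCLike.norm_ofReal, abs_of_pos ht]
  have hSLC := hS ((t : 𝕜)⁻¹ • x)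
    (fun n => by
      rw [map_smul, smul_eq_mul, norm_mul, norm_inv, RCLike.norm_ofReal, abs_of_pos ht]
      exact inv_mul_le_one_of_le₀ (hx n) ht.le)
    {a} {b} ⟨by simpa using ha, by simp⟩ (Finset.disjoint_singleton.mpr hab)
    (by simp [hxa]) (by simp [hxb]) _ _ (fun _ => hnorm α hα) (fun _ => hnorm β hβ)
  rw [hrescale a, hrescale b, mul_left_comm]
  exact mul_le_mul_of_nonneg_left hSLC ht.le

theorem SLCWith.norm_add_smul_le (hS : B.SLCWith seq 1) {x : X} {a b : ℕ}
    (ha : a ∈ Set.range seq) (hab : a ≠ b) (hxa : B.coord a x = 0) (hxb : B.coord b x = 0)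
    {γ c : 𝕜} (hγ : ‖γ‖ ≤ ‖c‖) (hx : ∀ n, ‖B.coord n x‖ ≤ ‖c‖) :
    ‖x + γ • B.e a‖ ≤ ‖x + c • B.e b‖ := by
  rcases eq_or_ne c 0 with rfl | hc
  · simp [norm_le_zero_iff.mp (hγ.trans_eq norm_zero)]
  obtain ⟨α, hα, hle⟩ := exists_norm_eq_and_norm_add_smul_le x (B.e a) hγ
  simpa using hle.trans (hS.norm_add_smul_le_of_norm_eq (norm_pos_iff.mpr hc) hx ha hab hxa hxb
    hα rfl)

theorem SLCWith.norm_add_sum_add_smul_le (hS : B.SLCWith seq 1) (c : ℕ → 𝕜) {E : Finset ℕ}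
    {a b : ℕ} (ha : a ∈ Set.range seq) (hab : a ≠ b) (haE : a ∉ E) (hbE : b ∉ E) {y : X}
    (hya : B.coord a y = 0) (hyb : B.coord b y = 0) (hyE : ∀ n ∈ E, B.coord n y = 0)
    (hca : ‖c a‖ ≤ ‖c b‖) (hcE : ∀ n ∈ E, ‖c n‖ ≤ ‖c b‖) (hy : ∀ n, ‖B.coord n y‖ ≤ ‖c b‖) :
    ‖(y + ∑ n ∈ E, c n • B.e n) + c a • B.e a‖ ≤ ‖(y + ∑ n ∈ E, c n • B.e n) + c b • B.e b‖ := by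
  refine hS.norm_add_smul_le ha hab ?_ ?_ hca fun n => ?_
  · rw [map_add, coord_sum_smul_e, if_neg haE, hya, add_zero]
  · rw [map_add, coord_sum_smul_e, if_neg hbE, hyb, add_zero]
  · rw [map_add, coord_sum_smul_e]
    split_ifs with hn
    · rw [hyE n hn, zero_add]
      exact hcE n hn
    · rw [add_zero]
      exact hy n

theorem SLCWith.norm_add_sum_smul_le (hS : B.SLCWith seq 1) (c : ℕ → 𝕜) {E F : Finset ℕ}
    (hcard : E.card = F.card) (hEF : Disjoint E F) (hE : (↑E : Set ℕ) ⊆ Set.range seq) {y : X}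
    (hyE : ∀ n ∈ E, B.coord n y = 0) (hyF : ∀ n ∈ F, B.coord n y = 0)
    (hc : ∀ e ∈ E, ∀ b ∈ F, ‖c e‖ ≤ ‖c b‖) (hy : ∀ n, ∀ b ∈ F, ‖B.coord n y‖ ≤ ‖c b‖) :
    ‖y + ∑ n ∈ E, c n • B.e n‖ ≤ ‖y + ∑ n ∈ F, c n • B.e n‖ := by
  induction E using Finset.induction_on generalizing F y with
  | empty =>
    obtain rfl : F = ∅ := Finset.card_eq_zero.mp (by simpa using hcard.symm)
    simp
  | insert e E he ih =>
    obtain ⟨b, hb, hbmin⟩ := F.exists_min_image (fun n => ‖c n‖)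
      (Finset.card_pos.mp (hcard ▸ Finset.card_pos.mpr (Finset.insert_nonempty e E)))
    have heb : e ≠ b := fun h => Finset.disjoint_left.mp hEF (Finset.mem_insert_self e E) (h ▸ hb)
    have hbE : b ∉ E := fun h => Finset.disjoint_left.mp hEF (Finset.mem_insert_of_mem h) hb
    have hswap := hS.norm_add_sum_add_smul_le c (hE (by simp)) heb he hbE (hyE e (by simp))
      (hyF b hb) (fun n hn => hyE n (Finset.mem_insert_of_mem hn)) (hc e (by simp) b hb)
      (fun n hn => hc n (Finset.mem_insert_of_mem hn) b hb) fun n => hy n b hb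
    have hrest : ‖(y + c b • B.e b) + ∑ n ∈ E, c n • B.e n‖ ≤
        ‖(y + c b • B.e b) + ∑ n ∈ F.erase b, c n • B.e n‖ := by
      refine ih (by rw [Finset.card_erase_of_mem hb, ← hcard, Finset.card_insert_of_notMem he]; rfl)
        (Finset.disjoint_of_subset_left (Finset.subset_insert e E)
          (hEF.mono_right (Finset.erase_subset b F)))
        (fun n hn => hE (by simp [Finset.mem_coe.mp hn])) (fun n hn => ?_) (fun n hn => ?_)
        (fun n hn b' hb' => hc n (Finset.mem_insert_of_mem hn) b' (Finset.mem_of_mem_erase hb'))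
        (fun n b' hb' => ?_)
      · rw [map_add, coord_smul_e, if_neg (ne_of_mem_of_not_mem hn hbE),
          hyE n (Finset.mem_insert_of_mem hn), add_zero]
      · rw [map_add, coord_smul_e, if_neg (Finset.ne_of_mem_erase hn),
          hyF n (Finset.mem_of_mem_erase hn), add_zero]
      · rw [map_add, coord_smul_e]
        split_ifs with hn
        · rw [hn, hyF b hb, zero_add]
          exact hbmin b' (Finset.mem_of_mem_erase hb')
        · rw [add_zero]
          exact hy n b' (Finset.mem_of_mem_erase hb')
    calc ‖y + ∑ n ∈ insert e E, c n • B.e n‖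
        = ‖(y + ∑ n ∈ E, c n • B.e n) + c e • B.e e‖ := by
          rw [Finset.sum_insert he, add_comm (c e • B.e e), add_assoc]
      _ ≤ ‖(y + c b • B.e b) + ∑ n ∈ E, c n • B.e n‖ := hswap.trans_eq (by rw [add_right_comm])
      _ ≤ ‖(y + c b • B.e b) + ∑ n ∈ F.erase b, c n • B.e n‖ := hrest
      _ = ‖y + ∑ n ∈ F, c n • B.e n‖ := by rw [← Finset.add_sum_erase F _ hb, add_assoc]

theorem SLCWith.almostGreedyWith_one (hS : B.SLCWith seq 1) : B.AlmostGreedyWith seq 1 := by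
  intro x m _ A hA hA_greedy D hD hDm
  rw [one_mul]
  set y := x - B.proj (A ∪ D) x with hy_def
  have hy : ∀ n, B.coord n y = if n ∈ A ∪ D then 0 else B.coord n x := fun n => by
    rw [map_sub, coord_proj_s15]
    split_ifs <;> simp
  have hkey := hS.norm_add_sum_smul_le (fun n => B.coord n x) (E := D \ A) (F := A \ D)
    (Finset.card_sdiff_comm (hA.trans hDm.symm)).symm disjoint_sdiff_sdiff
    (fun n hn => hD (Finset.mem_sdiff.mp hn).1)
    (fun n hn => by rw [hy, if_pos (Finset.mem_union_right A (Finset.mem_sdiff.mp hn).1)])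
    (fun n hn => by rw [hy, if_pos (Finset.mem_union_left D (Finset.mem_sdiff.mp hn).1)])
    (fun e he b hb => hA_greedy b (Finset.mem_sdiff.mp hb).1 e (Finset.mem_sdiff.mp he).2)
    (fun n b hb => by
      rw [hy]
      split_ifs with hn
      · simp
      · exact hA_greedy b (Finset.mem_sdiff.mp hb).1 n fun h => hn (Finset.mem_union_left D h))
  have hsplit : ∀ S T : Finset ℕ, S ∪ T = A ∪ D →
      x - B.proj S x = y + ∑ n ∈ T \ S, B.coord n x • B.e n := fun S T h => by
    rw [hy_def, ← h, ← Finset.union_sdiff_self_eq_union, proj, proj,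
      Finset.sum_union Finset.disjoint_sdiff]
    abel
  rwa [← hsplit A D rfl, ← hsplit D A (Finset.union_comm D A)] at hkey

theorem AlmostGreedyWith.slcWith_one (hseq : StrictMono seq) (hAG : B.AlmostGreedyWith seq 1) :
    B.SLCWith seq 1 := by
  intro x hx A D ⟨hA, hcard⟩ hAD hxA hxD ε δ hε hδ
  rw [one_mul]
  rcases D.eq_empty_or_nonempty with rfl | hD
  · obtain rfl : A = ∅ := Finset.card_eq_zero.mp (Nat.le_zero.mp hcard)
    simp [sgnSum]
  set u := x + B.sgnSum ε A + B.sgnSum δ D with hu_def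
  have hu : ∀ n, B.coord n u =
      B.coord n x + (if n ∈ A then ε n else 0) + (if n ∈ D then δ n else 0) := fun n => by
    rw [map_add, map_add, coord_sgnSum_s15, coord_sgnSum_s15]
  have huA : ∀ n ∈ A, B.coord n u = ε n := fun n hn => by
    rw [hu, hxA n hn, if_pos hn, if_neg (Finset.disjoint_left.mp hAD hn), zero_add, add_zero]
  have huD : ∀ n ∈ D, B.coord n u = δ n := fun n hn => by
    rw [hu, hxD n hn, if_neg (Finset.disjoint_right.mp hAD hn), if_pos hn, zero_add, zero_add]
  have hu_greedy : B.IsGreedySet u D := fun d hd n hn => by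
    rw [huD d hd, hδ d]
    by_cases hnA : n ∈ A
    · rw [huA n hnA, hε n]
    · rw [hu, if_neg hnA, if_neg hn, add_zero, add_zero]
      exact hx n
  have hpadded : ∀ᶠ k in atTop, ‖x + B.sgnSum ε A‖ ≤
      ‖x + B.sgnSum δ D - B.proj (intervalSet seq k (D.card - A.card)) x‖ := by
    filter_upwards [eventually_disjoint_intervalSet hseq (D.card - A.card) (A ∪ D)] with k hk
    set F := intervalSet seq k (D.card - A.card)
    have hAF : Disjoint A F := (hk.mono_right Finset.subset_union_left).symm
    have hAG' := hAG u D.card hD.card_pos D rfl hu_greedy (A ∪ F)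
      (by simpa using ⟨hA, intervalSet_subset_range seq k _⟩)
      (by rw [Finset.card_union_of_disjoint hAF, card_intervalSet hseq]; omega)
    have hprojD : B.proj D u = B.sgnSum δ D :=
      Finset.sum_congr rfl fun n hn => by rw [huD n hn]
    have hprojAF : B.proj (A ∪ F) u = B.sgnSum ε A + B.proj F x := by
      rw [proj, Finset.sum_union hAF]
      congr 1
      · exact Finset.sum_congr rfl fun n hn => by rw [huA n hn]
      · refine Finset.sum_congr rfl fun n hn => ?_
        have hn' : n ∉ A ∪ D := Finset.disjoint_left.mp hk hn
        rw [hu, if_neg fun h => hn' (Finset.mem_union_left D h),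
          if_neg fun h => hn' (Finset.mem_union_right A h), add_zero, add_zero]
    rw [one_mul, hprojD, hprojAF, hu_def] at hAG'
    convert hAG' using 2 <;> abel
  refine ge_of_tendsto ?_ hpadded
  simpa using ((B.tendsto_proj_intervalSet_atTop hseq (D.card - A.card) x).const_sub
    (x + B.sgnSum δ D)).norm

end BasisOf

theorem statement15_general {𝕜 X : Type*} [RCLike 𝕜] [NormedAddCommGroup X] [NormedSpace 𝕜 X]
    (B : BasisOf 𝕜 X) (seq : ℕ → ℕ) (hseq : StrictMono seq) :
    B.AlmostGreedyWith seq 1 ↔ B.SLCWith seq 1 :=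
  ⟨BasisOf.AlmostGreedyWith.slcWith_one hseq, BasisOf.SLCWith.almostGreedyWith_one⟩

/-- A basis is 1-(𝐧, almost greedy) iff it is 1-(𝐧, SLC). -/
theorem statement15 {𝕜 X : Type*} [RCLike 𝕜] [NormedAddCommGroup X] [NormedSpace 𝕜 X]
    [CompleteSpace X] (B : BasisOf 𝕜 X) (seq : ℕ → ℕ) (hseq : StrictMono seq) :
    B.AlmostGreedyWith seq 1 ↔ B.SLCWith seq 1 :=
  statement15_general B seq hseq
end

section
/- Let 𝐧 be a strictly increasing sequence of positive integers and let 𝐬 = (s_k)_{k≥1} be a strictly increasing sequence of positive integers with bounded additive gaps, i.e., sup_k (s_{k+1} − s_k) < ∞. Then every Markushevich basis of a Banach space that is 𝐬-(𝐧, strong partially greedy) is (𝐧, strong partially greedy). -/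
open scoped BigOperators ENNReal NNReal

section Aux

variable {𝕜 X : Type*} [RCLike 𝕜] [NormedAddCommGroup X] [NormedSpace 𝕜 X] (B : BasisOf 𝕜 X)

lemma BasisOf.coord_eventually_small (x : X) {t : ℝ} (ht : 0 < t) :
    ∃ N : ℕ, ∀ n, N ≤ n → ‖B.coord n x‖ < t := by
  obtain ⟨c₁, c₂, hc₁, hlow, hhigh⟩ := B.norm_bounds
  have hc₂ : 0 < c₂ := lt_of_lt_of_le hc₁ ((hlow 0).1.trans (hhigh 0).1)
  have hx : x ∈ closure (↑(Submodule.span 𝕜 (Set.range B.e)) : Set X) := B.dense_span x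
  rw [Metric.mem_closure_iff] at hx
  obtain ⟨y, hy, hdist⟩ := hx (t / c₂) (div_pos ht hc₂)
  rw [SetLike.mem_coe, Submodule.mem_span_set'] at hy
  obtain ⟨n, f, g, hsum⟩ := hy
  choose kk hkk using fun i => (g i).2
  refine ⟨(Finset.univ.sup kk) + 1, fun N hN => ?_⟩
  have hyz : B.coord N y = 0 := by
    rw [← hsum, map_sum]
    refine Finset.sum_eq_zero fun i _ => ?_
    rw [map_smul, ← hkk i, B.biorth]
    have hne : N ≠ kk i := by
      have := Finset.le_sup (Finset.mem_univ i) (f := kk)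
      omega
    simp [hne]
  have hxy : B.coord N x = B.coord N (x - y) := by rw [map_sub, hyz, sub_zero]
  rw [hxy]
  calc ‖B.coord N (x - y)‖ ≤ ‖B.coord N‖ * ‖x - y‖ := (B.coord N).le_opNorm _
    _ ≤ c₂ * ‖x - y‖ := mul_le_mul_of_nonneg_right (hhigh N).2 (norm_nonneg _)
    _ < c₂ * (t / c₂) := by
        apply mul_lt_mul_of_pos_left _ hc₂
        rwa [← dist_eq_norm]
    _ = t := by field_simp

lemma BasisOf.exists_insert_greedy (x : X) (A : Finset ℕ) (hA : B.IsGreedySet x A) :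
    ∃ b, b ∉ A ∧ B.IsGreedySet x (insert b A) := by
  by_cases hz : ∀ b, b ∉ A → B.coord b x = 0
  · obtain ⟨b, hb⟩ := Infinite.exists_notMem_finset A
    refine ⟨b, hb, fun a ha c hc => ?_⟩
    have h0 : B.coord c x = 0 := hz c (fun hh => hc (Finset.mem_insert_of_mem hh))
    simp [h0]
  · push_neg at hz
    obtain ⟨b₀, hb₀A, hb₀⟩ := hz
    have ht : 0 < ‖B.coord b₀ x‖ := norm_pos_iff.mpr hb₀
    obtain ⟨N, hN⟩ := B.coord_eventually_small x ht
    have hb₀N : b₀ ∈ Finset.range N \ A := by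
      rw [Finset.mem_sdiff, Finset.mem_range]
      refine ⟨?_, hb₀A⟩
      by_contra hcon
      exact absurd (hN b₀ (by omega)) (lt_irrefl _)
    obtain ⟨b, hbT, hbmax⟩ := Finset.exists_max_image (Finset.range N \ A)
      (fun c => ‖B.coord c x‖) ⟨b₀, hb₀N⟩
    have hbA : b ∉ A := (Finset.mem_sdiff.mp hbT).2
    have key : ∀ c, c ∉ A → ‖B.coord c x‖ ≤ ‖B.coord b x‖ := by
      intro c hc
      by_cases hcN : c ∈ Finset.range N
      · exact hbmax c (Finset.mem_sdiff.mpr ⟨hcN, hc⟩)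
      · have hNc : N ≤ c := by rw [Finset.mem_range] at hcN; omega
        exact le_trans (hN c hNc).le (hbmax b₀ hb₀N)
    refine ⟨b, hbA, fun a ha c hc => ?_⟩
    have hcA : c ∉ A := fun hh => hc (Finset.mem_insert_of_mem hh)
    rcases Finset.mem_insert.mp ha with rfl | haA
    · exact key c hcA
    · exact hA a haA c hcA

lemma BasisOf.exists_superset_greedy (x : X) (A : Finset ℕ) (hA : B.IsGreedySet x A)
    (j : ℕ) : ∃ A' : Finset ℕ, A ⊆ A' ∧ A'.card = A.card + j ∧ B.IsGreedySet x A' := by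
  induction j with
  | zero => exact ⟨A, subset_rfl, rfl, hA⟩
  | succ j ih =>
    obtain ⟨A', hsub, hcard, hg⟩ := ih
    obtain ⟨b, hb, hg'⟩ := B.exists_insert_greedy x A' hg
    exact ⟨insert b A', hsub.trans (Finset.subset_insert _ _),
      by rw [Finset.card_insert_of_notMem hb, hcard]; omega, hg'⟩

end Aux

/-- If the sequence `𝐬` has bounded additive gaps, every Markushevich basis
(here: a total basis) that is `𝐬`-(𝐧, strong partially greedy) is
(𝐧, strong partially greedy). -/
theorem statement17 {𝕜 X : Type*} [RCLike 𝕜] [NormedAddCommGroup X] [NormedSpace 𝕜 X]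
    [CompleteSpace X] (B : BasisOf 𝕜 X)
    (hMarkushevich : ∀ x : X, (∀ n, B.coord n x = 0) → x = 0)
    (seq : ℕ → ℕ) (hseq : StrictMono seq)
    (s : ℕ → ℕ) (hs : StrictMono s) (hs1 : 1 ≤ s 0)
    (hgap : ∃ L : ℕ, ∀ k, s (k + 1) - s k ≤ L)
    (h : ∃ C : ℝ, 1 ≤ C ∧ B.SPGOnWith seq s C) :
    B.SPG seq := by
  classical
  obtain ⟨C, hC1, hC⟩ := h
  obtain ⟨L, hL⟩ := hgap
  obtain ⟨c₁, c₂, hc₁, hlow, hhigh⟩ := B.norm_bounds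
  have hc₂ : 0 < c₂ := lt_of_lt_of_le hc₁ ((hlow 0).1.trans (hhigh 0).1)
  refine ⟨C + ((max L (s 0) : ℕ) : ℝ) * c₂ * c₂, ?_, ?_⟩
  · have hnn : (0:ℝ) ≤ ((max L (s 0) : ℕ) : ℝ) * c₂ * c₂ := by positivity
    linarith
  intro x m hm A hAcard hAg k hk
  obtain ⟨i, hmi, hji⟩ : ∃ i, m ≤ s i ∧ s i - m ≤ max L (s 0) := by
    have hex : ∃ i, m ≤ s i := ⟨m, hs.le_apply⟩
    refine ⟨Nat.find hex, Nat.find_spec hex, ?_⟩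
    rcases Nat.eq_zero_or_pos (Nat.find hex) with h0 | hpos
    · rw [h0]; omega
    · have h1 : ¬ m ≤ s (Nat.find hex - 1) := Nat.find_min hex (by omega)
      have h2 := hL (Nat.find hex - 1)
      have h3 : Nat.find hex - 1 + 1 = Nat.find hex := by omega
      rw [h3] at h2
      have h4 := Nat.find_spec hex
      omega
  obtain ⟨A', hsub, hcard, hg'⟩ := B.exists_superset_greedy x A hAg (s i - m)
  have hA'card : A'.card = s i := by rw [hcard, hAcard]; omega
  set R := ‖x - B.projSeq seq k x‖ with hR
  have hR0 : 0 ≤ R := norm_nonneg _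
  have hmain : ‖x - B.proj A' x‖ ≤ C * R := hC x i A' hA'card hg' k (hk.trans hmi)
  have hcoordseq : ∀ j, j ∉ (Finset.range k).image seq →
      B.coord j (B.projSeq seq k x) = 0 := by
    intro j hj
    unfold BasisOf.projSeq
    rw [map_sum]
    refine Finset.sum_eq_zero fun l hl => ?_
    rw [map_smul, B.biorth]
    have hne : j ≠ seq l := fun hh => hj (Finset.mem_image.mpr ⟨l, hl, hh.symm⟩)
    simp [hne]
  have hcoef : ∀ b, b ∉ A → ‖B.coord b x‖ ≤ c₂ * R := by
    intro b hb
    by_cases hcase : ∃ a ∈ A, a ∉ (Finset.range k).image seq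
    · obtain ⟨a, haA, haF⟩ := hcase
      have h2 : B.coord a x = B.coord a (x - B.projSeq seq k x) := by
        rw [map_sub, hcoordseq a haF, sub_zero]
      calc ‖B.coord b x‖ ≤ ‖B.coord a x‖ := hAg a haA b hb
        _ = ‖B.coord a (x - B.projSeq seq k x)‖ := by rw [h2]
        _ ≤ ‖B.coord a‖ * R := (B.coord a).le_opNorm _
        _ ≤ c₂ * R := mul_le_mul_of_nonneg_right (hhigh a).2 hR0
    · push_neg at hcase
      have hAF : A ⊆ (Finset.range k).image seq := hcase
      have hFcard : ((Finset.range k).image seq).card = k := by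
        rw [Finset.card_image_of_injective _ hseq.injective, Finset.card_range]
      have hEq : A = (Finset.range k).image seq :=
        Finset.eq_of_subset_of_card_le hAF (by rw [hFcard, hAcard]; exact hk)
      have hbF : b ∉ (Finset.range k).image seq := hEq ▸ hb
      have h2 : B.coord b x = B.coord b (x - B.projSeq seq k x) := by
        rw [map_sub, hcoordseq b hbF, sub_zero]
      calc ‖B.coord b x‖ = ‖B.coord b (x - B.projSeq seq k x)‖ := by rw [h2]
        _ ≤ ‖B.coord b‖ * R := (B.coord b).le_opNorm _
        _ ≤ c₂ * R := mul_le_mul_of_nonneg_right (hhigh b).2 hR0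
  have hdiff : B.proj A' x - B.proj A x = ∑ b ∈ A' \ A, B.coord b x • B.e b := by
    unfold BasisOf.proj
    rw [← Finset.sum_sdiff hsub, add_sub_cancel_right]
  have hcardle : (((A' \ A).card : ℕ) : ℝ) ≤ ((max L (s 0) : ℕ) : ℝ) := by
    have hc : (A' \ A).card ≤ max L (s 0) := by
      rw [Finset.card_sdiff_of_subset hsub, hcard]
      omega
    exact_mod_cast hc
  have hdiffnorm : ‖B.proj A' x - B.proj A x‖ ≤ ((max L (s 0) : ℕ) : ℝ) * c₂ * c₂ * R := by
    rw [hdiff]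
    calc ‖∑ b ∈ A' \ A, B.coord b x • B.e b‖
        ≤ ∑ b ∈ A' \ A, ‖B.coord b x • B.e b‖ := norm_sum_le _ _
      _ ≤ ∑ _b ∈ A' \ A, (c₂ * R) * c₂ := by
          refine Finset.sum_le_sum fun b hb => ?_
          rw [norm_smul]
          exact mul_le_mul (hcoef b (Finset.mem_sdiff.mp hb).2) (hhigh b).1
            (norm_nonneg _) (by positivity)
      _ = (((A' \ A).card : ℕ) : ℝ) * ((c₂ * R) * c₂) := by
          rw [Finset.sum_const, nsmul_eq_mul]
      _ ≤ ((max L (s 0) : ℕ) : ℝ) * ((c₂ * R) * c₂) :=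
          mul_le_mul_of_nonneg_right hcardle (by positivity)
      _ = ((max L (s 0) : ℕ) : ℝ) * c₂ * c₂ * R := by ring
  calc ‖x - B.proj A x‖ = ‖(x - B.proj A' x) + (B.proj A' x - B.proj A x)‖ := by
        rw [sub_add_sub_cancel]
    _ ≤ ‖x - B.proj A' x‖ + ‖B.proj A' x - B.proj A x‖ := norm_add_le _ _
    _ ≤ C * R + ((max L (s 0) : ℕ) : ℝ) * c₂ * c₂ * R := add_le_add hmain hdiffnorm
    _ = (C + ((max L (s 0) : ℕ) : ℝ) * c₂ * c₂) * R := by ring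
end
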